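/- arXiv:2302.11312 — 6 statements merged into one kernel-verified Lean document; each statement's English description precedes it below -/
import Mathlib

section
/- (Performance Difference Theorem, Theorem 1, finite discounted form.) For any two policies π and π', the performance difference satisfies J(π') − J(π) = Σ_s ρ_{π'}(s) · Σ_a π'(a|s) · A_π(s,a). -/
/-!
Write `W = V' - V` and `P'` for the transition matrix of `π'`. Averaging the advantage of `π`
over `π'` and using the Bellman equation of `π'` gives `W - γ P' W`, while the visitation
equation `ρ' = d₀ + γ ρ' P'` says exactly that `ρ' (I - γ P') = d₀`; pairing the two gives
`ρ' (W - γ P' W) = d₀ W = J(π') - J(π)`.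
-/

open Finset

section

variable {S A : Type*} [Fintype S] [Fintype A]

theorem sum_mul_eq_sum_visitation_mul_sub (M : S → S → ℝ) (γ : ℝ) (d0 ρ f : S → ℝ)
    (hρ : ∀ s', ρ s' = d0 s' + γ * ∑ s, ρ s * M s s') :
    ∑ s, d0 s * f s = ∑ s, ρ s * (f s - γ * ∑ s', M s s' * f s') := by
  have hd0 : ∀ s', d0 s' = ρ s' - γ * ∑ s, ρ s * M s s' := fun s' => by linarith [hρ s']
  simp only [hd0, sub_mul, mul_sub, sum_sub_distrib, mul_sum, sum_mul]
  rw [sum_comm]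
  congr 1
  exact sum_congr rfl fun _ _ => sum_congr rfl fun _ _ => by ring

theorem sum_transition_mul (p : S → A → S → ℝ) (π : S → A → ℝ) (f : S → ℝ) (s : S) :
    ∑ s', (∑ a, π s a * p s a s') * f s' = ∑ a, π s a * ∑ s', p s a s' * f s' := by
  simp only [sum_mul, mul_sum, mul_assoc]
  exact sum_comm

theorem sum_policy_mul_advantage (p : S → A → S → ℝ) (γ : ℝ) (r : S → A → ℝ)
    (π' : S → A → ℝ) (V V' : S → ℝ) (s : S) (hπ' : ∑ a, π' s a = 1)
    (hV' : V' s = ∑ a, π' s a * (r s a + γ * ∑ s', p s a s' * V' s')) :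
    ∑ a, π' s a * ((r s a + γ * ∑ s', p s a s' * V s') - V s)
      = (V' s - V s) - γ * ∑ a, π' s a * ∑ s', p s a s' * (V' s' - V s') := by
  have hV_avg : ∑ a, π' s a * V s = V s := by rw [← sum_mul, hπ', one_mul]
  calc ∑ a, π' s a * ((r s a + γ * ∑ s', p s a s' * V s') - V s)
      = ∑ a, π' s a * (r s a + γ * ∑ s', p s a s' * V' s') - ∑ a, π' s a * V s
          - γ * ∑ a, π' s a * ∑ s', p s a s' * (V' s' - V s') := by
        rw [mul_sum, ← sum_sub_distrib, ← sum_sub_distrib]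
        refine sum_congr rfl fun a _ => ?_
        simp only [mul_sub, sum_sub_distrib]
        ring
    _ = (V' s - V s) - γ * ∑ a, π' s a * ∑ s', p s a s' * (V' s' - V s') := by
        rw [hV_avg, ← hV']

end

theorem performance_difference_general
    {S A : Type*} [Fintype S] [Fintype A]
    -- transition kernel
    (p : S → A → S → ℝ)
    -- discount factor
    (γ : ℝ)
    -- initial state distribution
    (d0 : S → ℝ)
    -- reward function
    (r : S → A → ℝ)
    -- the two policies
    (π' : S → A → ℝ)
    (hπ'1 : ∀ s, ∑ a, π' s a = 1)
    -- value functions of π and π' (Bellman equations)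
    (V V' : S → ℝ)
    (hV' : ∀ s, V' s = ∑ a, π' s a * (r s a + γ * ∑ s', p s a s' * V' s'))
    -- discounted visitation frequency of π'
    (ρ' : S → ℝ)
    (hρ' : ∀ s', ρ' s' = d0 s' + γ * ∑ s, ρ' s * (∑ a, π' s a * p s a s')) :
    (∑ s, d0 s * V' s) - (∑ s, d0 s * V s)
      = ∑ s, ρ' s * ∑ a, π' s a * ((r s a + γ * ∑ s', p s a s' * V s') - V s) := by
  rw [← sum_sub_distrib]
  simp only [← mul_sub]
  rw [sum_mul_eq_sum_visitation_mul_sub _ γ d0 ρ' _ hρ']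
  refine sum_congr rfl fun s _ => ?_
  rw [sum_transition_mul, sum_policy_mul_advantage p γ r π' V V' s (hπ'1 s) (hV' s)]

/-- Performance Difference Theorem (Kakade & Langford), finite discounted form:
`J(π') − J(π) = Σ_s ρ_{π'}(s) · Σ_a π'(a|s) · A_π(s,a)`. -/
theorem performance_difference
    {S A : Type*} [Fintype S] [Fintype A] [Nonempty S] [Nonempty A]
    -- transition kernel
    (p : S → A → S → ℝ)
    (hp0 : ∀ s a s', 0 ≤ p s a s') (hp1 : ∀ s a, ∑ s', p s a s' = 1)
    -- discount factor
    (γ : ℝ) (hγ0 : 0 ≤ γ) (hγ1 : γ < 1)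
    -- initial state distribution
    (d0 : S → ℝ) (hd00 : ∀ s, 0 ≤ d0 s) (hd01 : ∑ s, d0 s = 1)
    -- reward function
    (r : S → A → ℝ)
    -- the two policies
    (π π' : S → A → ℝ)
    (hπ0 : ∀ s a, 0 ≤ π s a) (hπ1 : ∀ s, ∑ a, π s a = 1)
    (hπ'0 : ∀ s a, 0 ≤ π' s a) (hπ'1 : ∀ s, ∑ a, π' s a = 1)
    -- value functions of π and π' (Bellman equations)
    (V V' : S → ℝ)
    (hV : ∀ s, V s = ∑ a, π s a * (r s a + γ * ∑ s', p s a s' * V s'))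
    (hV' : ∀ s, V' s = ∑ a, π' s a * (r s a + γ * ∑ s', p s a s' * V' s'))
    -- discounted visitation frequency of π'
    (ρ' : S → ℝ)
    (hρ' : ∀ s', ρ' s' = d0 s' + γ * ∑ s, ρ' s * (∑ a, π' s a * p s a s')) :
    (∑ s, d0 s * V' s) - (∑ s, d0 s * V s)
      = ∑ s, ρ' s * ∑ a, π' s a * ((r s a + γ * ∑ s', p s a s' * V s') - V s) :=
  performance_difference_general p γ d0 r π' hπ'1 V V' hV' ρ' hρ'
end

section
/- (Lemma 1, bound on the π-expected advantage of π̂_β.) For any two policies π and π̂_β and every state s, the quantity Ā_{π,π̂_β}(s) := Σ_a π(a|s) A_{π̂_β}(s,a) satisfies |Ā_{π,π̂_β}(s)| ≤ 2 · (max_a |A_{π̂_β}(s,a)|) · D_TV(π‖π̂_β)[s]. -/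
/-!
Since `V` is the `π̂_β`-average of `Q`, the advantage `Q - V` has `π̂_β`-mean zero. Hence its
`π`-mean equals `Σ_a (π(a|s) - π̂_β(a|s)) A(s,a)`, which is bounded by `max_a |A(s,a)|` times the
`ℓ¹` distance `Σ_a |π(a|s) - π̂_β(a|s)| = 2 D_TV(π‖π̂_β)[s]`.
-/

open Finset

namespace Finset

variable {ι R : Type*} (s : Finset ι)

theorem sum_mul_sub_weighted_mean_eq_zero [CommRing R] {q f : ι → R} {m : R}
    (hq : ∑ i ∈ s, q i = 1) (hm : m = ∑ i ∈ s, q i * f i) : ∑ i ∈ s, q i * (f i - m) = 0 := by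
  simp only [mul_sub, sum_sub_distrib, ← sum_mul, hq, hm, one_mul, sub_self]

theorem sum_mul_eq_sum_sub_mul_of_sum_mul_eq_zero [Ring R] {w q f : ι → R}
    (hq : ∑ i ∈ s, q i * f i = 0) : ∑ i ∈ s, w i * f i = ∑ i ∈ s, (w i - q i) * f i := by
  simp only [sub_mul, sum_sub_distrib, hq, sub_zero]

theorem abs_sum_mul_le_sum_abs_mul_sup' [Ring R] [LinearOrder R] [IsOrderedRing R]
    (hs : s.Nonempty) (w f : ι → R) :
    |∑ i ∈ s, w i * f i| ≤ (∑ i ∈ s, |w i|) * s.sup' hs (fun i => |f i|) := by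
  calc |∑ i ∈ s, w i * f i| ≤ ∑ i ∈ s, |w i| * |f i| := by
        simpa only [abs_mul] using abs_sum_le_sum_abs (fun i => w i * f i) s
    _ ≤ ∑ i ∈ s, |w i| * s.sup' hs (fun i => |f i|) :=
        sum_le_sum fun i hi => mul_le_mul_of_nonneg_left
          (le_sup' (fun i => |f i|) hi) (abs_nonneg _)
    _ = (∑ i ∈ s, |w i|) * s.sup' hs (fun i => |f i|) := (sum_mul ..).symm

end Finset

theorem expected_advantage_bound_general
    {S A : Type*} [Fintype S] [Fintype A] [Nonempty A]
    -- transition kernel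
    (p : S → A → S → ℝ)
    -- discount factor
    (γ : ℝ)
    -- reward function
    (r : S → A → ℝ)
    -- the two policies
    (π πβ : S → A → ℝ)
    (hπβ1 : ∀ s, ∑ a, πβ s a = 1)
    -- value function of π̂β (Bellman equation)
    (Vβ : S → ℝ)
    (hVβ : ∀ s, Vβ s = ∑ a, πβ s a * (r s a + γ * ∑ s', p s a s' * Vβ s'))
    (s : S) :
    |∑ a, π s a * ((r s a + γ * ∑ s', p s a s' * Vβ s') - Vβ s)|
      ≤ 2 * (univ.sup' univ_nonempty
              fun a => |(r s a + γ * ∑ s', p s a s' * Vβ s') - Vβ s|)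
          * ((1 / 2) * ∑ a, |π s a - πβ s a|) := by
  have hβ_mean_zero := sum_mul_sub_weighted_mean_eq_zero univ (hπβ1 s) (hVβ s)
  rw [sum_mul_eq_sum_sub_mul_of_sum_mul_eq_zero univ hβ_mean_zero]
  calc _ ≤ (∑ a, |π s a - πβ s a|) * univ.sup' univ_nonempty
              (fun a => |(r s a + γ * ∑ s', p s a s' * Vβ s') - Vβ s|) :=
        abs_sum_mul_le_sum_abs_mul_sup' univ univ_nonempty _ _
    _ = _ := by ring

/-- Lemma 1: for any two policies `π`, `π̂_β` and every state `s`,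
`|Σ_a π(a|s) A_{π̂β}(s,a)| ≤ 2 · max_a |A_{π̂β}(s,a)| · D_TV(π‖π̂β)[s]`. -/
theorem expected_advantage_bound
    {S A : Type*} [Fintype S] [Fintype A] [Nonempty S] [Nonempty A]
    -- transition kernel
    (p : S → A → S → ℝ)
    (hp0 : ∀ s a s', 0 ≤ p s a s') (hp1 : ∀ s a, ∑ s', p s a s' = 1)
    -- discount factor
    (γ : ℝ) (hγ0 : 0 ≤ γ) (hγ1 : γ < 1)
    -- reward function
    (r : S → A → ℝ)
    -- the two policies
    (π πβ : S → A → ℝ)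
    (hπ0 : ∀ s a, 0 ≤ π s a) (hπ1 : ∀ s, ∑ a, π s a = 1)
    (hπβ0 : ∀ s a, 0 ≤ πβ s a) (hπβ1 : ∀ s, ∑ a, πβ s a = 1)
    -- value function of π̂β (Bellman equation)
    (Vβ : S → ℝ)
    (hVβ : ∀ s, Vβ s = ∑ a, πβ s a * (r s a + γ * ∑ s', p s a s' * Vβ s'))
    (s : S) :
    |∑ a, π s a * ((r s a + γ * ∑ s', p s a s' * Vβ s') - Vβ s)|
      ≤ 2 * (univ.sup' univ_nonempty
              fun a => |(r s a + γ * ∑ s', p s a s' * Vβ s') - Vβ s|)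
          * ((1 / 2) * ∑ a, |π s a - πβ s a|) :=
  expected_advantage_bound_general p γ r π πβ hπβ1 Vβ hVβ s
end

section
/- (Lemma 2, ℓ¹ bound on the difference of discounted visitation frequencies.) For any two policies π and π', the discounted visitation frequencies satisfy Σ_s |ρ_π(s) − ρ_{π'}(s)| ≤ (2γ/(1−γ)) · Σ_s ρ_{π'}(s) · D_TV(π‖π')[s]. -/
/-!
Write `P_π` for the state-transition matrix of `π`. Subtracting the two fixed-point equations gives
`ρ - ρ' = γ (ρ - ρ') P_π + γ ρ' (P_π - P_π')`. A row-stochastic matrix does not increase the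
`ℓ¹` norm of a row vector, so `‖ρ - ρ'‖₁ ≤ γ ‖ρ - ρ'‖₁ + γ Σ_s |ρ' s| Σ_s' |P_π - P_π'| s s'`, and
the last row sums are at most `2 D_TV(π‖π')[s]`. Finally `ρ' ≥ 0`, so `|ρ' s| = ρ' s`: summing the
fixed-point equation and its absolute value (with the same contraction) gives
`(1 - γ) Σ |ρ'| ≤ Σ d₀ = (1 - γ) Σ ρ'`.
-/

open Finset Matrix

section Stochastic

variable {S : Type*} [Fintype S]

theorem sum_abs_vecMul_le (x : S → ℝ) (N : Matrix S S ℝ) :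
    ∑ j, |(x ᵥ* N) j| ≤ ∑ i, |x i| * ∑ j, |N i j| :=
  calc ∑ j, |(x ᵥ* N) j| ≤ ∑ j, ∑ i, |x i * N i j| :=
        sum_le_sum fun j _ => abs_sum_le_sum_abs _ _
    _ = ∑ i, |x i| * ∑ j, |N i j| := by
        rw [sum_comm]
        simp only [abs_mul, mul_sum]

variable [DecidableEq S] {M : Matrix S S ℝ}

theorem sum_vecMul_of_mem_rowStochastic (hM : M ∈ rowStochastic ℝ S) (x : S → ℝ) :
    ∑ j, (x ᵥ* M) j = ∑ i, x i := by
  simp only [vecMul, dotProduct]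
  rw [sum_comm]
  simp [← mul_sum, sum_row_of_mem_rowStochastic hM]

theorem sum_abs_vecMul_le_of_mem_rowStochastic (hM : M ∈ rowStochastic ℝ S) (x : S → ℝ) :
    ∑ j, |(x ᵥ* M) j| ≤ ∑ i, |x i| := by
  have hrow : ∀ i, ∑ j, |M i j| = 1 := fun i => by
    simp_rw [abs_of_nonneg (nonneg_of_mem_rowStochastic hM)]
    exact sum_row_of_mem_rowStochastic hM i
  simpa [hrow] using sum_abs_vecMul_le x M

theorem nonneg_of_eq_add_smul_vecMul {γ : ℝ} (hγ0 : 0 ≤ γ) (hγ1 : γ < 1)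
    (hM : M ∈ rowStochastic ℝ S) {d ρ : S → ℝ}
    (hd : ∀ s, 0 ≤ d s) (hρ : ρ = d + γ • (ρ ᵥ* M)) (s : S) : 0 ≤ ρ s := by
  have hsum : ∑ i, ρ i = ∑ i, d i + γ * ∑ i, ρ i := by
    conv_lhs => rw [hρ]
    simp [sum_add_distrib, ← mul_sum, sum_vecMul_of_mem_rowStochastic hM]
  have habs : ∑ i, |ρ i| ≤ ∑ i, d i + γ * ∑ i, |ρ i| :=
    calc ∑ i, |ρ i| = ∑ i, |d i + γ * (ρ ᵥ* M) i| := by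
          conv_lhs => rw [hρ]
          rfl
      _ ≤ ∑ i, (d i + γ * |(ρ ᵥ* M) i|) := sum_le_sum fun i _ => by
          have := abs_add_le (d i) (γ * (ρ ᵥ* M) i)
          rwa [abs_of_nonneg (hd i), abs_mul, abs_of_nonneg hγ0] at this
      _ ≤ ∑ i, d i + γ * ∑ i, |ρ i| := by
          rw [sum_add_distrib, ← mul_sum]
          exact add_le_add le_rfl
            (mul_le_mul_of_nonneg_left (sum_abs_vecMul_le_of_mem_rowStochastic hM ρ) hγ0)
  have hgap : ∑ i, (|ρ i| - ρ i) ≤ 0 := by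
    rw [sum_sub_distrib]
    nlinarith
  have hs : |ρ s| - ρ s ≤ 0 :=
    (single_le_sum (fun i _ => sub_nonneg.2 (le_abs_self (ρ i))) (mem_univ s)).trans hgap
  linarith [abs_nonneg (ρ s)]

theorem sum_abs_sub_le_of_eq_add_smul_vecMul {γ : ℝ} (hγ0 : 0 ≤ γ) (hγ1 : γ < 1)
    (hM : M ∈ rowStochastic ℝ S) {M' : Matrix S S ℝ} {d ρ ρ' : S → ℝ}
    (hρ : ρ = d + γ • (ρ ᵥ* M)) (hρ' : ρ' = d + γ • (ρ' ᵥ* M')) :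
    ∑ s, |ρ s - ρ' s| ≤ γ / (1 - γ) * ∑ s, |ρ' s| * ∑ s', |M s s' - M' s s'| := by
  set D := ∑ s, |ρ s - ρ' s|
  set K := ∑ s, |ρ' s| * ∑ s', |M s s' - M' s s'|
  have hdiff : ρ - ρ' = γ • ((ρ - ρ') ᵥ* M + ρ' ᵥ* (M - M')) := by
    conv_lhs => rw [hρ, hρ']
    rw [sub_vecMul, vecMul_sub, smul_add, smul_sub, smul_sub]
    abel
  have hD : D ≤ γ * (D + K) :=
    calc D = ∑ s, |(γ • ((ρ - ρ') ᵥ* M + ρ' ᵥ* (M - M'))) s| := by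
          rw [← hdiff]
          rfl
      _ ≤ γ * (∑ s, |((ρ - ρ') ᵥ* M) s| + ∑ s, |(ρ' ᵥ* (M - M')) s|) := by
          simp only [Pi.smul_apply, Pi.add_apply, smul_eq_mul, abs_mul, abs_of_nonneg hγ0,
            ← mul_sum, ← sum_add_distrib]
          gcongr
          exact abs_add_le _ _
      _ ≤ γ * (D + K) := by
          gcongr
          · exact sum_abs_vecMul_le_of_mem_rowStochastic hM _
          · exact sum_abs_vecMul_le ρ' (M - M')
  rw [div_mul_eq_mul_div, le_div_iff₀ (by linarith)]
  linarith

end Stochastic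

section Policy

variable {S A : Type*} [Fintype S] [Fintype A]

/-- `P_π`, with `π s a = π(a|s)` and `p s a s' = p(s'|s,a)`. -/
def transitionMatrix (p : S → A → S → ℝ) (π : S → A → ℝ) : Matrix S S ℝ :=
  Matrix.of fun s s' => ∑ a, π s a * p s a s'

variable {p : S → A → S → ℝ}

theorem transitionMatrix_mem_rowStochastic [DecidableEq S] (hp0 : ∀ s a s', 0 ≤ p s a s')
    (hp1 : ∀ s a, ∑ s', p s a s' = 1) {π : S → A → ℝ}
    (hπ0 : ∀ s a, 0 ≤ π s a) (hπ1 : ∀ s, ∑ a, π s a = 1) :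
    transitionMatrix p π ∈ rowStochastic ℝ S := by
  refine mem_rowStochastic_iff_sum.2
    ⟨fun s s' => sum_nonneg fun a _ => mul_nonneg (hπ0 s a) (hp0 s a s'), fun s => ?_⟩
  simp only [transitionMatrix, of_apply]
  rw [sum_comm]
  simp [← mul_sum, hp1, hπ1]

theorem sum_abs_transitionMatrix_sub_le (hp0 : ∀ s a s', 0 ≤ p s a s')
    (hp1 : ∀ s a, ∑ s', p s a s' = 1) (π π' : S → A → ℝ) (s : S) :
    ∑ s', |transitionMatrix p π s s' - transitionMatrix p π' s s'| ≤ ∑ a, |π s a - π' s a| :=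
  calc ∑ s', |transitionMatrix p π s s' - transitionMatrix p π' s s'|
      ≤ ∑ s', ∑ a, |(π s a - π' s a) * p s a s'| := sum_le_sum fun s' _ => by
        simp only [transitionMatrix, of_apply, ← sum_sub_distrib, sub_mul]
        exact abs_sum_le_sum_abs _ _
    _ = ∑ a, |π s a - π' s a| := by
        rw [sum_comm]
        simp [abs_mul, abs_of_nonneg (hp0 _ _ _), ← mul_sum, hp1]

end Policy

theorem visitation_difference_bound_general
    {S A : Type*} [Fintype S] [Fintype A]
    -- transition kernel
    (p : S → A → S → ℝ)
    (hp0 : ∀ s a s', 0 ≤ p s a s') (hp1 : ∀ s a, ∑ s', p s a s' = 1)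
    -- discount factor
    (γ : ℝ) (hγ0 : 0 ≤ γ) (hγ1 : γ < 1)
    -- initial state distribution
    (d0 : S → ℝ) (hd00 : ∀ s, 0 ≤ d0 s)
    -- the two policies
    (π π' : S → A → ℝ)
    (hπ0 : ∀ s a, 0 ≤ π s a) (hπ1 : ∀ s, ∑ a, π s a = 1)
    (hπ'0 : ∀ s a, 0 ≤ π' s a) (hπ'1 : ∀ s, ∑ a, π' s a = 1)
    -- discounted visitation frequencies of π and π'
    (ρ ρ' : S → ℝ)
    (hρ : ∀ s', ρ s' = d0 s' + γ * ∑ s, ρ s * (∑ a, π s a * p s a s'))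
    (hρ' : ∀ s', ρ' s' = d0 s' + γ * ∑ s, ρ' s * (∑ a, π' s a * p s a s')) :
    ∑ s, |ρ s - ρ' s|
      ≤ (2 * γ / (1 - γ)) * ∑ s, ρ' s * ((1 / 2) * ∑ a, |π s a - π' s a|) := by
  classical
  have hρ_fix : ρ = d0 + γ • (ρ ᵥ* transitionMatrix p π) := funext hρ
  have hρ'_fix : ρ' = d0 + γ • (ρ' ᵥ* transitionMatrix p π') := funext hρ'
  have hρ'0 : ∀ s, 0 ≤ ρ' s := nonneg_of_eq_add_smul_vecMul hγ0 hγ1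
    (transitionMatrix_mem_rowStochastic hp0 hp1 hπ'0 hπ'1) hd00 hρ'_fix
  calc ∑ s, |ρ s - ρ' s|
      ≤ γ / (1 - γ) * ∑ s, |ρ' s| *
          ∑ s', |transitionMatrix p π s s' - transitionMatrix p π' s s'| :=
        sum_abs_sub_le_of_eq_add_smul_vecMul hγ0 hγ1
          (transitionMatrix_mem_rowStochastic hp0 hp1 hπ0 hπ1) hρ_fix hρ'_fix
    _ ≤ γ / (1 - γ) * ∑ s, ρ' s * ∑ a, |π s a - π' s a| := by
        have hcoef : 0 ≤ γ / (1 - γ) := div_nonneg hγ0 (by linarith)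
        refine mul_le_mul_of_nonneg_left (sum_le_sum fun s _ => ?_) hcoef
        rw [abs_of_nonneg (hρ'0 s)]
        exact mul_le_mul_of_nonneg_left (sum_abs_transitionMatrix_sub_le hp0 hp1 π π' s) (hρ'0 s)
    _ = (2 * γ / (1 - γ)) * ∑ s, ρ' s * ((1 / 2) * ∑ a, |π s a - π' s a|) := by
        rw [mul_sum, mul_sum]
        refine sum_congr rfl fun s _ => ?_
        ring

/-- Lemma 2 (Achiam et al.): ℓ¹ bound on the difference of discounted visitation
frequencies: `Σ_s |ρ_π(s) − ρ_{π'}(s)| ≤ (2γ/(1−γ)) · Σ_s ρ_{π'}(s) · D_TV(π‖π')[s]`. -/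
theorem visitation_difference_bound
    {S A : Type*} [Fintype S] [Fintype A] [Nonempty S] [Nonempty A]
    -- transition kernel
    (p : S → A → S → ℝ)
    (hp0 : ∀ s a s', 0 ≤ p s a s') (hp1 : ∀ s a, ∑ s', p s a s' = 1)
    -- discount factor
    (γ : ℝ) (hγ0 : 0 ≤ γ) (hγ1 : γ < 1)
    -- initial state distribution
    (d0 : S → ℝ) (hd00 : ∀ s, 0 ≤ d0 s) (hd01 : ∑ s, d0 s = 1)
    -- the two policies
    (π π' : S → A → ℝ)
    (hπ0 : ∀ s a, 0 ≤ π s a) (hπ1 : ∀ s, ∑ a, π s a = 1)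
    (hπ'0 : ∀ s a, 0 ≤ π' s a) (hπ'1 : ∀ s, ∑ a, π' s a = 1)
    -- discounted visitation frequencies of π and π'
    (ρ ρ' : S → ℝ)
    (hρ : ∀ s', ρ s' = d0 s' + γ * ∑ s, ρ s * (∑ a, π s a * p s a s'))
    (hρ' : ∀ s', ρ' s' = d0 s' + γ * ∑ s, ρ' s * (∑ a, π' s a * p s a s')) :
    ∑ s, |ρ s - ρ' s|
      ≤ (2 * γ / (1 - γ)) * ∑ s, ρ' s * ((1 / 2) * ∑ a, |π s a - π' s a|) :=
  visitation_difference_bound_general p hp0 hp1 γ hγ0 hγ1 d0 hd00 π π' hπ0 hπ1 hπ'0 hπ'1 ρ ρ' hρ hρ'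
end

section
/- (Theorem 3, offline monotonic improvement bound over an updated policy π_k.) Let π, π_k, π̂_β and π_D be policies (π̂_β the estimated behavior policy, π_D a policy representing the offline dataset) and write ρ_D = ρ_{π_D}. Define J_Δ(π, π_k) = J(π) − J(π_k), the approximation Ĵ_Δ(π, π_k) = Σ_s ρ_D(s) Σ_a π(a|s) A_{π_k}(s,a), and 𝔸_k = max_{s,a} |A_{π_k}(s,a)|. Then J_Δ(π, π_k) ≥ Ĵ_Δ(π, π_k) − (4γ/(1−γ)) · 𝔸_k · (max_s D_TV(π‖π_k)[s]) · [ Σ_s ρ_{π_k}(s) D_TV(π‖π_k)[s] + Σ_s ρ_{π̂_β}(s) D_TV(π_k‖π̂_β)[s] + Σ_s ρ_D(s) D_TV(π̂_β‖π_D)[s] ]. -/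
/-!
By the performance difference lemma, `J(π) - J(π_k) = ∑ₛ ρ_π(s) g(s)` with
`g(s) = ∑ₐ π(a|s) A_{π_k}(s,a)`, where `ρ_π` is the visitation frequency of `π` itself.
Since `π_k` has zero expected advantage, `|g(s)| ≤ 2 𝔸_k max_s D_TV(π‖π_k)[s]`, so replacing `ρ_π`
by `ρ_D` costs at most that bound times `‖ρ_π - ρ_D‖₁`. This distance is split along
`π → π_k → π̂_β → π_D`; for visitation frequencies `ρ, ρ'` of kernels `P, P'`,
`ρ - ρ' = γ (ρ - ρ') P + γ ρ' (P - P')` and `P` is non-expansive in `ℓ¹`, whence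
`(1 - γ) ‖ρ - ρ'‖₁ ≤ γ ∑ₛ ρ'(s) ‖P(s,·) - P'(s,·)‖₁ ≤ 2γ ∑ₛ ρ'(s) D_TV(π‖π')[s]`.
-/

open Finset Matrix

section

variable {m n : Type*} [Fintype m] [Fintype n]

theorem sum_abs_vecMul_le_sum_abs (x : m → ℝ) {P : Matrix m n ℝ}
    (hP0 : ∀ i j, 0 ≤ P i j) (hP1 : ∀ i, ∑ j, P i j = 1) :
    ∑ j, |(x ᵥ* P) j| ≤ ∑ i, |x i| :=
  calc ∑ j, |(x ᵥ* P) j| ≤ ∑ j, ∑ i, |x i| * P i j := by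
        refine sum_le_sum fun j _ => (abs_sum_le_sum_abs _ _).trans_eq ?_
        simp only [abs_mul, abs_of_nonneg (hP0 _ j)]
    _ = ∑ i, |x i| := by
        rw [sum_comm]
        simp only [← mul_sum, hP1, mul_one]

theorem sum_abs_vecMul_le_sum_mul_sum_abs {x : m → ℝ} (hx : 0 ≤ x) (P : Matrix m n ℝ) :
    ∑ j, |(x ᵥ* P) j| ≤ ∑ i, x i * ∑ j, |P i j| :=
  calc ∑ j, |(x ᵥ* P) j| ≤ ∑ j, ∑ i, x i * |P i j| := by
        refine sum_le_sum fun j _ => (abs_sum_le_sum_abs _ _).trans_eq ?_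
        simp only [abs_mul, abs_of_nonneg (hx _)]
    _ = ∑ i, x i * ∑ j, |P i j| := by
        rw [sum_comm]
        simp only [mul_sum]

theorem sum_mul_sub_sum_mul_le {x y g : n → ℝ} {K : ℝ} (hg : ∀ i, |g i| ≤ K) :
    ∑ i, y i * g i - ∑ i, x i * g i ≤ K * ∑ i, |x i - y i| := by
  rw [← sum_sub_distrib, mul_sum]
  refine sum_le_sum fun i _ => ?_
  calc y i * g i - x i * g i = -((x i - y i) * g i) := by ring
    _ ≤ |x i - y i| * |g i| := (neg_le_abs _).trans_eq (abs_mul _ _)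
    _ ≤ |x i - y i| * K := mul_le_mul_of_nonneg_left (hg i) (abs_nonneg _)
    _ = K * |x i - y i| := mul_comm _ _

theorem dotProduct_eq_of_eq_add_smul {P : Matrix n n ℝ} {γ : ℝ} {c ρ g W : n → ℝ}
    (hρ : ρ = c + γ • ρ ᵥ* P) (hW : W = g + γ • P *ᵥ W) : c ⬝ᵥ W = ρ ⬝ᵥ g := by
  have hc : c = ρ - γ • ρ ᵥ* P := eq_sub_of_add_eq hρ.symm
  have hg : g = W - γ • P *ᵥ W := eq_sub_of_add_eq hW.symm
  rw [hc, hg, sub_dotProduct, dotProduct_sub, smul_dotProduct, dotProduct_smul,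
    dotProduct_mulVec]

section RowStochastic

variable [DecidableEq n] {P : Matrix n n ℝ} {γ : ℝ}

theorem one_sub_mul_sum_abs_le (hP : P ∈ rowStochastic ℝ n) (hγ : 0 ≤ γ) {x y : n → ℝ}
    (h : x = y + γ • x ᵥ* P) : (1 - γ) * ∑ i, |x i| ≤ ∑ i, |y i| := by
  have hP' := mem_rowStochastic_iff_sum.1 hP
  have hxP := sum_abs_vecMul_le_sum_abs x hP'.1 hP'.2
  have hx : ∑ i, |x i| ≤ ∑ i, |y i| + γ * ∑ i, |(x ᵥ* P) i| :=
    calc ∑ i, |x i| = ∑ i, |y i + γ * (x ᵥ* P) i| :=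
          sum_congr rfl fun i _ => congrArg abs (congrFun h i)
      _ ≤ ∑ i, (|y i| + γ * |(x ᵥ* P) i|) := by
          refine sum_le_sum fun i _ => (abs_add_le _ _).trans_eq ?_
          rw [abs_mul, abs_of_nonneg hγ]
      _ = _ := by rw [sum_add_distrib, mul_sum]
  linarith [mul_le_mul_of_nonneg_left hxP hγ]

theorem exists_eq_add_smul_vecMul (hP : P ∈ rowStochastic ℝ n) (hγ0 : 0 ≤ γ) (hγ1 : γ < 1)
    (c : n → ℝ) : ∃ ρ, ρ = c + γ • ρ ᵥ* P := by
  let L : (n → ℝ) →ₗ[ℝ] n → ℝ := LinearMap.id - γ • P.vecMulLinear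
  have hL : Function.Injective L := by
    rw [← LinearMap.ker_eq_bot, LinearMap.ker_eq_bot']
    intro x hx
    have hfix : x = 0 + γ • x ᵥ* P := by
      rw [zero_add, ← sub_eq_zero]
      exact hx
    have h := one_sub_mul_sum_abs_le hP hγ0 hfix
    simp only [Pi.zero_apply, abs_zero, sum_const_zero] at h
    have h0 : ∑ i, |x i| = 0 :=
      le_antisymm (nonpos_of_mul_nonpos_right h (by linarith)) (by positivity)
    funext i
    simpa using (sum_eq_zero_iff_of_nonneg fun i _ => abs_nonneg (x i)).1 h0 i (mem_univ i)
  obtain ⟨ρ, hρ⟩ := LinearMap.injective_iff_surjective.1 hL c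
  refine ⟨ρ, ?_⟩
  rw [← hρ]
  simp [L]

theorem nonneg_of_eq_add_smul_vecMul_s6 (hP : P ∈ rowStochastic ℝ n) (hγ0 : 0 ≤ γ) (hγ1 : γ < 1)
    {c ρ : n → ℝ} (hc : 0 ≤ c) (hρ : ρ = c + γ • ρ ᵥ* P) : 0 ≤ ρ := by
  -- `∑ |ρ| ≤ (∑ c) / (1 - γ) = ∑ ρ`, which forces `|ρ| = ρ`.
  have hmass : ∑ i, ρ i = ∑ i, c i + γ * ∑ i, ρ i := by
    simp only [← dotProduct_one]
    conv_lhs => rw [hρ]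
    rw [add_dotProduct, smul_dotProduct, ← dotProduct_mulVec,
      one_vecMul_of_mem_rowStochastic hP, smul_eq_mul]
  have hbound := one_sub_mul_sum_abs_le hP hγ0 hρ
  simp only [abs_of_nonneg (hc _)] at hbound
  have hsum : ∑ i, |ρ i| = ∑ i, ρ i := by
    refine le_antisymm ?_ (sum_le_sum fun i _ => le_abs_self _)
    nlinarith
  intro i
  exact (abs_nonneg _).trans
    ((sum_eq_sum_iff_of_le fun i _ => le_abs_self (ρ i)).1 hsum.symm i (mem_univ i)).ge

theorem one_sub_mul_sum_abs_sub_le (hP : P ∈ rowStochastic ℝ n) (hγ : 0 ≤ γ)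
    (P' : Matrix n n ℝ) {c ρ ρ' : n → ℝ} (hρ'0 : 0 ≤ ρ') (hρ : ρ = c + γ • ρ ᵥ* P)
    (hρ' : ρ' = c + γ • ρ' ᵥ* P') :
    (1 - γ) * ∑ i, |ρ i - ρ' i| ≤ γ * ∑ i, ρ' i * ∑ j, |P i j - P' i j| := by
  have h : ρ - ρ' = γ • ρ' ᵥ* (P - P') + γ • (ρ - ρ') ᵥ* P := by
    rw [vecMul_sub, sub_vecMul]
    nth_rewrite 1 [hρ, hρ']
    module
  calc (1 - γ) * ∑ i, |ρ i - ρ' i| ≤ ∑ i, |(γ • ρ' ᵥ* (P - P')) i| :=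
        one_sub_mul_sum_abs_le hP hγ h
    _ = γ * ∑ j, |(ρ' ᵥ* (P - P')) j| := by
        simp only [Pi.smul_apply, smul_eq_mul, abs_mul, abs_of_nonneg hγ, mul_sum]
    _ ≤ γ * ∑ i, ρ' i * ∑ j, |P i j - P' i j| :=
        mul_le_mul_of_nonneg_left (sum_abs_vecMul_le_sum_mul_sum_abs hρ'0 _) hγ

end RowStochastic

end

namespace MDP

variable {S A : Type*} [Fintype A]

noncomputable def tvDist (π π' : S → A → ℝ) (s : S) : ℝ :=
  1 / 2 * ∑ a, |π s a - π' s a|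

theorem tvDist_nonneg (π π' : S → A → ℝ) (s : S) : 0 ≤ tvDist π π' s := by
  unfold tvDist
  positivity

def IsPolicy (π : S → A → ℝ) : Prop :=
  (∀ s a, 0 ≤ π s a) ∧ ∀ s, ∑ a, π s a = 1

def policyKernel (p : S → A → S → ℝ) (π : S → A → ℝ) : Matrix S S ℝ :=
  fun s => π s ᵥ* p s

variable [Fintype S]

def qValue (p : S → A → S → ℝ) (r : S → A → ℝ) (γ : ℝ) (V : S → ℝ) (s : S) (a : A) : ℝ :=
  r s a + γ * ∑ s', p s a s' * V s'

def advantage (p : S → A → S → ℝ) (r : S → A → ℝ) (γ : ℝ) (V : S → ℝ) (s : S) (a : A) : ℝ :=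
  qValue p r γ V s a - V s

variable {p : S → A → S → ℝ}

theorem policyKernel_mem_rowStochastic [DecidableEq S]
    (hp0 : ∀ s a s', 0 ≤ p s a s') (hp1 : ∀ s a, ∑ s', p s a s' = 1) {π : S → A → ℝ}
    (hπ : IsPolicy π) : policyKernel p π ∈ rowStochastic ℝ S := by
  refine mem_rowStochastic_iff_sum.2 ⟨fun s s' => ?_, fun s => ?_⟩
  · exact sum_nonneg fun a _ => mul_nonneg (hπ.1 s a) (hp0 s a s')
  · simp only [policyKernel, vecMul, dotProduct]
    rw [sum_comm]
    simp only [← mul_sum, hp1, mul_one, hπ.2]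

theorem sum_abs_policyKernel_sub_le (hp0 : ∀ s a s', 0 ≤ p s a s')
    (hp1 : ∀ s a, ∑ s', p s a s' = 1) (π π' : S → A → ℝ) (s : S) :
    ∑ s', |policyKernel p π s s' - policyKernel p π' s s'| ≤ 2 * tvDist π π' s := by
  have h := sum_abs_vecMul_le_sum_abs (π s - π' s) (hp0 s) (hp1 s)
  simp only [vecMul, dotProduct, Pi.sub_apply, sub_mul, sum_sub_distrib] at h
  exact h.trans_eq (by rw [tvDist]; ring)

theorem sum_abs_sub_le_sum_mul_tvDist [DecidableEq S] (hp0 : ∀ s a s', 0 ≤ p s a s')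
    (hp1 : ∀ s a, ∑ s', p s a s' = 1) {γ : ℝ} (hγ0 : 0 ≤ γ) (hγ1 : γ < 1) {d0 : S → ℝ}
    (hd0 : 0 ≤ d0) {π π' : S → A → ℝ} (hπ : IsPolicy π) (hπ' : IsPolicy π') {ρ ρ' : S → ℝ}
    (hρ : ρ = d0 + γ • ρ ᵥ* policyKernel p π) (hρ' : ρ' = d0 + γ • ρ' ᵥ* policyKernel p π') :
    ∑ s, |ρ s - ρ' s| ≤ 2 * γ / (1 - γ) * ∑ s, ρ' s * tvDist π π' s := by
  have hρ'0 := nonneg_of_eq_add_smul_vecMul_s6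
    (policyKernel_mem_rowStochastic hp0 hp1 hπ') hγ0 hγ1 hd0 hρ'
  have h := one_sub_mul_sum_abs_sub_le (policyKernel_mem_rowStochastic hp0 hp1 hπ) hγ0 _
    hρ'0 hρ hρ'
  have hrow : ∑ s, ρ' s * ∑ s', |policyKernel p π s s' - policyKernel p π' s s'|
      ≤ ∑ s, ρ' s * (2 * tvDist π π' s) :=
    sum_le_sum fun s _ =>
      mul_le_mul_of_nonneg_left (sum_abs_policyKernel_sub_le hp0 hp1 π π' s) (hρ'0 s)
  rw [div_mul_eq_mul_div, le_div_iff₀ (by linarith), mul_comm]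
  calc (1 - γ) * ∑ s, |ρ s - ρ' s| ≤ γ * ∑ s, ρ' s * (2 * tvDist π π' s) :=
        h.trans (mul_le_mul_of_nonneg_left hrow hγ0)
    _ = 2 * γ * ∑ s, ρ' s * tvDist π π' s := by
        simp only [mul_sum]
        exact sum_congr rfl fun s _ => by ring

theorem sum_abs_sub_le_sum_mul_tvDist_chain [DecidableEq S] (hp0 : ∀ s a s', 0 ≤ p s a s')
    (hp1 : ∀ s a, ∑ s', p s a s' = 1) {γ : ℝ} (hγ0 : 0 ≤ γ) (hγ1 : γ < 1) {d0 : S → ℝ}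
    (hd0 : 0 ≤ d0) {π₁ π₂ π₃ π₄ : S → A → ℝ} (hπ₁ : IsPolicy π₁) (hπ₂ : IsPolicy π₂)
    (hπ₃ : IsPolicy π₃) (hπ₄ : IsPolicy π₄) {ρ₁ ρ₂ ρ₃ ρ₄ : S → ℝ}
    (hρ₁ : ρ₁ = d0 + γ • ρ₁ ᵥ* policyKernel p π₁) (hρ₂ : ρ₂ = d0 + γ • ρ₂ ᵥ* policyKernel p π₂)
    (hρ₃ : ρ₃ = d0 + γ • ρ₃ ᵥ* policyKernel p π₃) (hρ₄ : ρ₄ = d0 + γ • ρ₄ ᵥ* policyKernel p π₄) :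
    ∑ s, |ρ₁ s - ρ₄ s| ≤ 2 * γ / (1 - γ) * (∑ s, ρ₂ s * tvDist π₁ π₂ s
      + ∑ s, ρ₃ s * tvDist π₂ π₃ s + ∑ s, ρ₄ s * tvDist π₃ π₄ s) := by
  have h₁₂ := sum_abs_sub_le_sum_mul_tvDist hp0 hp1 hγ0 hγ1 hd0 hπ₁ hπ₂ hρ₁ hρ₂
  have h₂₃ := sum_abs_sub_le_sum_mul_tvDist hp0 hp1 hγ0 hγ1 hd0 hπ₂ hπ₃ hρ₂ hρ₃
  have h₃₄ := sum_abs_sub_le_sum_mul_tvDist hp0 hp1 hγ0 hγ1 hd0 hπ₃ hπ₄ hρ₃ hρ₄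
  have htri : ∑ s, |ρ₁ s - ρ₄ s|
      ≤ ∑ s, |ρ₁ s - ρ₂ s| + ∑ s, |ρ₂ s - ρ₃ s| + ∑ s, |ρ₃ s - ρ₄ s| := by
    simp only [← sum_add_distrib]
    exact sum_le_sum fun s _ =>
      (abs_sub_le _ (ρ₃ s) _).trans (add_le_add_left (abs_sub_le _ _ _) _)
  linarith

variable {r : S → A → ℝ} {γ : ℝ}

theorem sum_mul_advantage_eq_sub {π : S → A → ℝ} (hπ1 : ∀ s, ∑ a, π s a = 1) (V : S → ℝ)
    (s : S) :
    ∑ a, π s a * advantage p r γ V s a = ∑ a, π s a * qValue p r γ V s a - V s := by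
  simp only [advantage, mul_sub, sum_sub_distrib, ← sum_mul, hπ1, one_mul]

theorem abs_sum_mul_advantage_le {π πk : S → A → ℝ} (hπk1 : ∀ s, ∑ a, πk s a = 1) {Vk : S → ℝ}
    (hVk : ∀ s, Vk s = ∑ a, πk s a * qValue p r γ Vk s a) {M : ℝ} (s : S)
    (hM : ∀ a, |advantage p r γ Vk s a| ≤ M) :
    |∑ a, π s a * advantage p r γ Vk s a| ≤ 2 * M * tvDist π πk s := by
  have hk : ∑ a, πk s a * advantage p r γ Vk s a = 0 := by
    rw [sum_mul_advantage_eq_sub hπk1, ← hVk, sub_self]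
  calc |∑ a, π s a * advantage p r γ Vk s a|
      = |∑ a, (π s a - πk s a) * advantage p r γ Vk s a| := by
        simp only [sub_mul, sum_sub_distrib, hk, sub_zero]
    _ ≤ ∑ a, |π s a - πk s a| * M := by
        refine (abs_sum_le_sum_abs _ _).trans (sum_le_sum fun a _ => ?_)
        rw [abs_mul]
        exact mul_le_mul_of_nonneg_left (hM a) (abs_nonneg _)
    _ = 2 * M * tvDist π πk s := by
        rw [tvDist, ← sum_mul]
        ring

theorem abs_sum_mul_advantage_le_sup' [Nonempty S] [Nonempty A] {π πk : S → A → ℝ}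
    (hπk1 : ∀ s, ∑ a, πk s a = 1) {Vk : S → ℝ}
    (hVk : ∀ s, Vk s = ∑ a, πk s a * qValue p r γ Vk s a) (s : S) :
    |∑ a, π s a * advantage p r γ Vk s a|
      ≤ 2 * (univ.sup' univ_nonempty fun sa : S × A => |advantage p r γ Vk sa.1 sa.2|)
        * univ.sup' univ_nonempty (tvDist π πk) := by
  set 𝔸 := univ.sup' univ_nonempty fun sa : S × A => |advantage p r γ Vk sa.1 sa.2|
  have h𝔸 : ∀ a, |advantage p r γ Vk s a| ≤ 𝔸 := fun a =>
    le_sup' (fun sa : S × A => |advantage p r γ Vk sa.1 sa.2|) (mem_univ (s, a))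
  have h𝔸0 : 0 ≤ 𝔸 := (abs_nonneg _).trans (h𝔸 (Classical.arbitrary A))
  calc _ ≤ 2 * 𝔸 * tvDist π πk s := abs_sum_mul_advantage_le hπk1 hVk s h𝔸
    _ ≤ 2 * 𝔸 * univ.sup' univ_nonempty (tvDist π πk) := by
        gcongr
        exact le_sup' (tvDist π πk) (mem_univ s)

theorem performance_difference {d0 : S → ℝ} {π : S → A → ℝ} (hπ1 : ∀ s, ∑ a, π s a = 1)
    {V Vk ρ : S → ℝ} (hV : ∀ s, V s = ∑ a, π s a * qValue p r γ V s a)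
    (hρ : ρ = d0 + γ • ρ ᵥ* policyKernel p π) :
    ∑ s, d0 s * V s - ∑ s, d0 s * Vk s = ∑ s, ρ s * ∑ a, π s a * advantage p r γ Vk s a := by
  have hW : V - Vk = (fun s => ∑ a, π s a * advantage p r γ Vk s a)
      + γ • policyKernel p π *ᵥ (V - Vk) := by
    funext s
    have hq : ∀ a, qValue p r γ V s a
        = qValue p r γ Vk s a + γ * ∑ s', p s a s' * (V - Vk) s' := by
      intro a
      simp only [qValue, Pi.sub_apply, mul_sub, sum_sub_distrib]
      ring
    have hP : (policyKernel p π *ᵥ (V - Vk)) s = ∑ a, π s a * ∑ s', p s a s' * (V - Vk) s' :=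
      (dotProduct_mulVec (π s) (p s) (V - Vk)).symm
    simp only [Pi.sub_apply, Pi.add_apply, Pi.smul_apply, smul_eq_mul, hP,
      sum_mul_advantage_eq_sub hπ1, hV s, hq, mul_add, sum_add_distrib, mul_left_comm _ γ,
      ← mul_sum]
    ring
  exact (dotProduct_sub d0 V Vk).symm.trans (dotProduct_eq_of_eq_add_smul hρ hW)

end MDP

open MDP

theorem offline_improvement_bound_updated_general
    {S A : Type*} [Fintype S] [Fintype A] [Nonempty S] [Nonempty A]
    -- transition kernel
    (p : S → A → S → ℝ)
    (hp0 : ∀ s a s', 0 ≤ p s a s') (hp1 : ∀ s a, ∑ s', p s a s' = 1)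
    -- discount factor
    (γ : ℝ) (hγ0 : 0 ≤ γ) (hγ1 : γ < 1)
    -- initial state distribution
    (d0 : S → ℝ) (hd00 : ∀ s, 0 ≤ d0 s)
    -- reward function
    (r : S → A → ℝ)
    -- policies: target π, updated πk, estimated behavior π̂β, dataset policy π_D
    (π πk πβ πD : S → A → ℝ)
    (hπ0 : ∀ s a, 0 ≤ π s a) (hπ1 : ∀ s, ∑ a, π s a = 1)
    (hπk0 : ∀ s a, 0 ≤ πk s a) (hπk1 : ∀ s, ∑ a, πk s a = 1)
    (hπβ0 : ∀ s a, 0 ≤ πβ s a) (hπβ1 : ∀ s, ∑ a, πβ s a = 1)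
    (hπD0 : ∀ s a, 0 ≤ πD s a) (hπD1 : ∀ s, ∑ a, πD s a = 1)
    -- value functions of π and πk (Bellman equations)
    (V Vk : S → ℝ)
    (hV : ∀ s, V s = ∑ a, π s a * (r s a + γ * ∑ s', p s a s' * V s'))
    (hVk : ∀ s, Vk s = ∑ a, πk s a * (r s a + γ * ∑ s', p s a s' * Vk s'))
    -- discounted visitation frequencies of πk, π̂β and of the dataset policy π_D
    (ρk ρβ ρD : S → ℝ)
    (hρk : ∀ s', ρk s' = d0 s' + γ * ∑ s, ρk s * (∑ a, πk s a * p s a s'))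
    (hρβ : ∀ s', ρβ s' = d0 s' + γ * ∑ s, ρβ s * (∑ a, πβ s a * p s a s'))
    (hρD : ∀ s', ρD s' = d0 s' + γ * ∑ s, ρD s * (∑ a, πD s a * p s a s')) :
    (∑ s, d0 s * V s) - (∑ s, d0 s * Vk s)
      ≥ (∑ s, ρD s * ∑ a, π s a * ((r s a + γ * ∑ s', p s a s' * Vk s') - Vk s))
        - (4 * γ / (1 - γ))
            * (univ.sup' univ_nonempty fun sa : S × A =>
                |(r sa.1 sa.2 + γ * ∑ s', p sa.1 sa.2 s' * Vk s') - Vk sa.1|)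
            * (univ.sup' univ_nonempty fun s =>
                (1 / 2) * ∑ a, |π s a - πk s a|)
            * ((∑ s, ρk s * ((1 / 2) * ∑ a, |π s a - πk s a|))
                + (∑ s, ρβ s * ((1 / 2) * ∑ a, |πk s a - πβ s a|))
                + (∑ s, ρD s * ((1 / 2) * ∑ a, |πβ s a - πD s a|))) := by
  classical
  change ∑ s, d0 s * V s - ∑ s, d0 s * Vk s ≥ ∑ s, ρD s * ∑ a, π s a * advantage p r γ Vk s a
    - 4 * γ / (1 - γ) * (univ.sup' univ_nonempty fun sa : S × A => |advantage p r γ Vk sa.1 sa.2|)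
      * univ.sup' univ_nonempty (tvDist π πk)
      * (∑ s, ρk s * tvDist π πk s + ∑ s, ρβ s * tvDist πk πβ s + ∑ s, ρD s * tvDist πβ πD s)
  obtain ⟨ρ, hρ⟩ :=
    exists_eq_add_smul_vecMul (policyKernel_mem_rowStochastic hp0 hp1 ⟨hπ0, hπ1⟩) hγ0 hγ1 d0
  set 𝔸 := univ.sup' univ_nonempty fun sa : S × A => |advantage p r γ Vk sa.1 sa.2|
  set ε := univ.sup' univ_nonempty (tvDist π πk)
  set T := ∑ s, ρk s * tvDist π πk s + ∑ s, ρβ s * tvDist πk πβ s + ∑ s, ρD s * tvDist πβ πD s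
  have hg := abs_sum_mul_advantage_le_sup' (π := π) hπk1 hVk
  have hK : 0 ≤ 2 * 𝔸 * ε := (abs_nonneg _).trans (hg (Classical.arbitrary S))
  have hshift : ∑ s, |ρ s - ρD s| ≤ 2 * γ / (1 - γ) * T :=
    sum_abs_sub_le_sum_mul_tvDist_chain hp0 hp1 hγ0 hγ1 hd00 ⟨hπ0, hπ1⟩ ⟨hπk0, hπk1⟩
      ⟨hπβ0, hπβ1⟩ ⟨hπD0, hπD1⟩ hρ (funext hρk) (funext hρβ) (funext hρD)
  have hgap := sum_mul_sub_sum_mul_le (x := ρ) (y := ρD) hg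
  have hC : 4 * γ / (1 - γ) * 𝔸 * ε * T = 2 * 𝔸 * ε * (2 * γ / (1 - γ) * T) := by ring
  rw [ge_iff_le, performance_difference hπ1 hV hρ, hC]
  linarith [mul_le_mul_of_nonneg_left hshift hK]

/-- Theorem 3: offline monotonic improvement bound over an updated policy `π_k`. -/
theorem offline_improvement_bound_updated
    {S A : Type*} [Fintype S] [Fintype A] [Nonempty S] [Nonempty A]
    -- transition kernel
    (p : S → A → S → ℝ)
    (hp0 : ∀ s a s', 0 ≤ p s a s') (hp1 : ∀ s a, ∑ s', p s a s' = 1)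
    -- discount factor
    (γ : ℝ) (hγ0 : 0 ≤ γ) (hγ1 : γ < 1)
    -- initial state distribution
    (d0 : S → ℝ) (hd00 : ∀ s, 0 ≤ d0 s) (hd01 : ∑ s, d0 s = 1)
    -- reward function
    (r : S → A → ℝ)
    -- policies: target π, updated πk, estimated behavior π̂β, dataset policy π_D
    (π πk πβ πD : S → A → ℝ)
    (hπ0 : ∀ s a, 0 ≤ π s a) (hπ1 : ∀ s, ∑ a, π s a = 1)
    (hπk0 : ∀ s a, 0 ≤ πk s a) (hπk1 : ∀ s, ∑ a, πk s a = 1)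
    (hπβ0 : ∀ s a, 0 ≤ πβ s a) (hπβ1 : ∀ s, ∑ a, πβ s a = 1)
    (hπD0 : ∀ s a, 0 ≤ πD s a) (hπD1 : ∀ s, ∑ a, πD s a = 1)
    -- value functions of π and πk (Bellman equations)
    (V Vk : S → ℝ)
    (hV : ∀ s, V s = ∑ a, π s a * (r s a + γ * ∑ s', p s a s' * V s'))
    (hVk : ∀ s, Vk s = ∑ a, πk s a * (r s a + γ * ∑ s', p s a s' * Vk s'))
    -- discounted visitation frequencies of πk, π̂β and of the dataset policy π_D
    (ρk ρβ ρD : S → ℝ)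
    (hρk : ∀ s', ρk s' = d0 s' + γ * ∑ s, ρk s * (∑ a, πk s a * p s a s'))
    (hρβ : ∀ s', ρβ s' = d0 s' + γ * ∑ s, ρβ s * (∑ a, πβ s a * p s a s'))
    (hρD : ∀ s', ρD s' = d0 s' + γ * ∑ s, ρD s * (∑ a, πD s a * p s a s')) :
    (∑ s, d0 s * V s) - (∑ s, d0 s * Vk s)
      ≥ (∑ s, ρD s * ∑ a, π s a * ((r s a + γ * ∑ s', p s a s' * Vk s') - Vk s))
        - (4 * γ / (1 - γ))
            * (univ.sup' univ_nonempty fun sa : S × A =>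
                |(r sa.1 sa.2 + γ * ∑ s', p sa.1 sa.2 s' * Vk s') - Vk sa.1|)
            * (univ.sup' univ_nonempty fun s =>
                (1 / 2) * ∑ a, |π s a - πk s a|)
            * ((∑ s, ρk s * ((1 / 2) * ∑ a, |π s a - πk s a|))
                + (∑ s, ρβ s * ((1 / 2) * ∑ a, |πk s a - πβ s a|))
                + (∑ s, ρD s * ((1 / 2) * ∑ a, |πβ s a - πD s a|))) :=
  offline_improvement_bound_updated_general p hp0 hp1 γ hγ0 hγ1 d0 hd00 r π πk πβ πD hπ0 hπ1 hπk0
    hπk1 hπβ0 hπβ1 hπD0 hπD1 V Vk hV hVk ρk ρβ ρD hρk hρβ hρD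
end

section
/- (Value difference bound between two policies.) Suppose the reward depends only on the state and |r(s)| ≤ R_max for all s. For any two policies π and π' and every state s, |V_π(s) − V_{π'}(s)| ≤ (2γ/(1−γ)) · R_max · Σ_{s'} ρ_{π'}^{(s)}(s') · D_TV(π‖π')[s'], where ρ_{π'}^{(s)} is the discounted visitation frequency of π' started from s. -/
/-!
Write `P_π` for the state-transition matrix of `π`. Subtracting the two Bellman equations, the
difference `D = V_π - V_{π'}` solves `D = g + γ P_{π'} D` with source `g = γ (P_π - P_{π'}) V_π`.
The visitation frequency solves the adjoint equation `ρ = δ_s + γ ρ P_{π'}`, so pairing the two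
gives `D(s) = Σ_u ρ(u) g(u)`. Since `|V_π| ≤ R_max / (1 - γ)`, each `|g(u)|` is at most
`γ R_max / (1 - γ) · Σ_a |π(a|u) - π'(a|u)|`, and `ρ ≥ 0` lets these bounds be summed.
-/

open Finset Matrix

section Stochastic

variable {ι : Type*} [Fintype ι]

theorem abs_sum_mul_le_of_sum_eq_one {w f : ι → ℝ} (hw0 : ∀ i, 0 ≤ w i) (hw1 : ∑ i, w i = 1)
    {B : ℝ} (hf : ∀ i, |f i| ≤ B) : |∑ i, w i * f i| ≤ B :=
  calc |∑ i, w i * f i| ≤ ∑ i, w i * |f i| := by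
        refine (abs_sum_le_sum_abs _ _).trans_eq ?_
        simp only [abs_mul, abs_of_nonneg (hw0 _)]
    _ ≤ ∑ i, w i * B := sum_le_sum fun i _ => mul_le_mul_of_nonneg_left (hf i) (hw0 i)
    _ = B := by rw [← sum_mul, hw1, one_mul]

variable {Q : ι → ι → ℝ} {γ : ℝ}

theorem abs_le_of_bellman (hQ0 : ∀ i j, 0 ≤ Q i j) (hQ1 : ∀ i, ∑ j, Q i j = 1)
    (hγ0 : 0 ≤ γ) (hγ1 : γ < 1) {r f : ι → ℝ} {R : ℝ} (hr : ∀ i, |r i| ≤ R)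
    (hf : ∀ i, f i = r i + γ * ∑ j, Q i j * f j) (i : ι) : |f i| ≤ R / (1 - γ) := by
  obtain ⟨k, -, hk⟩ := exists_max_image univ (fun j => |f j|) ⟨i, mem_univ i⟩
  have hmax : ∀ j, |f j| ≤ |f k| := fun j => hk j (mem_univ j)
  have hfk : |f k| ≤ R + γ * |f k| :=
    calc |f k| = |r k + γ * ∑ j, Q k j * f j| := by rw [← hf k]
      _ ≤ |r k| + γ * |∑ j, Q k j * f j| :=
          (abs_add_le _ _).trans_eq (by rw [abs_mul, abs_of_nonneg hγ0])
      _ ≤ R + γ * |f k| :=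
          add_le_add (hr k) (mul_le_mul_of_nonneg_left
            (abs_sum_mul_le_of_sum_eq_one (hQ0 k) (hQ1 k) hmax) hγ0)
  rw [le_div_iff₀ (by linarith)]
  nlinarith [hmax i]

/-- The negative part `n` of `ρ` satisfies `n ≤ γ n Q`; summing over the states, where `Q` has
unit row sums, gives `Σ n ≤ γ Σ n`, so `n = 0`. -/
theorem nonneg_of_adjoint_bellman (hQ0 : ∀ i j, 0 ≤ Q i j) (hQ1 : ∀ i, ∑ j, Q i j = 1)
    (hγ0 : 0 ≤ γ) (hγ1 : γ < 1) {b ρ : ι → ℝ} (hb : ∀ j, 0 ≤ b j)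
    (hρ : ∀ j, ρ j = b j + γ * ∑ i, ρ i * Q i j) (j : ι) : 0 ≤ ρ j := by
  set n : ι → ℝ := fun i => max (-ρ i) 0
  have hn0 : ∀ i, 0 ≤ n i := fun i => le_max_right _ _
  have hn : ∀ k, n k ≤ γ * ∑ i, n i * Q i k := by
    intro k
    have hneg : ∑ i, -ρ i * Q i k ≤ ∑ i, n i * Q i k := by
      gcongr with i
      · exact hQ0 i k
      · exact le_max_left _ _
    refine max_le ?_ (mul_nonneg hγ0 (sum_nonneg fun i _ => mul_nonneg (hn0 i) (hQ0 i k)))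
    rw [hρ k]
    simp only [neg_mul, sum_neg_distrib] at hneg
    nlinarith [hb k]
  have hsum : ∑ i, n i ≤ γ * ∑ i, n i :=
    calc ∑ i, n i ≤ ∑ k, γ * ∑ i, n i * Q i k := sum_le_sum fun k _ => hn k
      _ = γ * ∑ i, n i := by
          rw [← mul_sum, sum_comm]
          simp only [← mul_sum, hQ1, mul_one]
  have hsum0 : ∑ i, n i = 0 := by
    have hsum_nonneg := sum_nonneg fun i (_ : i ∈ univ) => hn0 i
    nlinarith
  have hnj : n j = 0 := (sum_eq_zero_iff_of_nonneg fun i _ => hn0 i).mp hsum0 j (mem_univ j)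
  have hρn : -ρ j ≤ n j := le_max_left _ _
  linarith

theorem sub_eq_of_bellman {Q' : ι → ι → ℝ} {r f f' : ι → ℝ}
    (hf : ∀ i, f i = r i + γ * ∑ j, Q i j * f j)
    (hf' : ∀ i, f' i = r i + γ * ∑ j, Q' i j * f' j) (i : ι) :
    f i - f' i = γ * ∑ j, (Q i j - Q' i j) * f j + γ * ∑ j, Q' i j * (f j - f' j) := by
  rw [hf i, hf' i]
  simp only [sub_mul, mul_sub, sum_sub_distrib]
  ring

theorem eq_sum_mul_of_bellman_of_adjoint [DecidableEq ι] {g D ρ : ι → ℝ} {s : ι}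
    (hD : ∀ i, D i = g i + γ * ∑ j, Q i j * D j)
    (hρ : ∀ j, ρ j = (if j = s then 1 else 0) + γ * ∑ i, ρ i * Q i j) :
    D s = ∑ i, ρ i * g i := by
  have hg : g = D - γ • (of Q *ᵥ D) := funext fun i => by
    simp only [Pi.sub_apply, Pi.smul_apply, smul_eq_mul, mulVec, dotProduct, of_apply]
    linarith [hD i]
  have hδ : ρ - γ • (ρ ᵥ* of Q) = Pi.single s 1 := funext fun j => by
    simp only [Pi.sub_apply, Pi.smul_apply, smul_eq_mul, vecMul, dotProduct, of_apply,
      Pi.single_apply]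
    linarith [hρ j]
  calc D s = Pi.single s 1 ⬝ᵥ D := by rw [single_dotProduct, one_mul]
    _ = ρ ⬝ᵥ (D - γ • (of Q *ᵥ D)) := by
        rw [← hδ, sub_dotProduct, dotProduct_sub, smul_dotProduct, dotProduct_smul,
          dotProduct_mulVec]
    _ = ∑ i, ρ i * g i := by rw [← hg]; rfl

end Stochastic

section Policy

variable {S A : Type*} [Fintype A]

def policyKernel (π : S → A → ℝ) (p : S → A → S → ℝ) (s s' : S) : ℝ :=
  ∑ a, π s a * p s a s'

variable {π π' : S → A → ℝ} {p : S → A → S → ℝ}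

theorem policyKernel_nonneg (hπ0 : ∀ s a, 0 ≤ π s a) (hp0 : ∀ s a s', 0 ≤ p s a s') (s s' : S) :
    0 ≤ policyKernel π p s s' :=
  sum_nonneg fun a _ => mul_nonneg (hπ0 s a) (hp0 s a s')

theorem sum_policyKernel [Fintype S] (hπ1 : ∀ s, ∑ a, π s a = 1)
    (hp1 : ∀ s a, ∑ s', p s a s' = 1) (s : S) :
    ∑ s', policyKernel π p s s' = 1 := by
  simp only [policyKernel]
  rw [sum_comm]
  simp only [← mul_sum, hp1, mul_one, hπ1]

theorem abs_sum_policyKernel_sub_mul_le [Fintype S] (hp0 : ∀ s a s', 0 ≤ p s a s')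
    (hp1 : ∀ s a, ∑ s', p s a s' = 1) {f : S → ℝ} {B : ℝ} (hf : ∀ s, |f s| ≤ B) (s : S) :
    |∑ s', (policyKernel π p s s' - policyKernel π' p s s') * f s'|
      ≤ (∑ a, |π s a - π' s a|) * B := by
  have hswap : ∑ s', (policyKernel π p s s' - policyKernel π' p s s') * f s'
      = ∑ a, (π s a - π' s a) * ∑ s', p s a s' * f s' := by
    simp only [policyKernel, ← sum_sub_distrib, ← sub_mul, sum_mul, mul_sum, mul_assoc]
    exact sum_comm
  rw [hswap, sum_mul]
  refine (abs_sum_le_sum_abs _ _).trans (sum_le_sum fun a _ => ?_)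
  rw [abs_mul]
  gcongr
  exact abs_sum_mul_le_of_sum_eq_one (hp0 s a) (hp1 s a) hf

end Policy

theorem value_difference_bound_general
    {S A : Type*} [Fintype S] [DecidableEq S] [Fintype A]
    -- transition kernel
    (p : S → A → S → ℝ)
    (hp0 : ∀ s a s', 0 ≤ p s a s') (hp1 : ∀ s a, ∑ s', p s a s' = 1)
    -- discount factor
    (γ : ℝ) (hγ0 : 0 ≤ γ) (hγ1 : γ < 1)
    -- state-only bounded reward
    (r : S → ℝ) (Rmax : ℝ) (hr : ∀ s, |r s| ≤ Rmax)
    -- the two policies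
    (π π' : S → A → ℝ)
    (hπ0 : ∀ s a, 0 ≤ π s a) (hπ1 : ∀ s, ∑ a, π s a = 1)
    (hπ'0 : ∀ s a, 0 ≤ π' s a) (hπ'1 : ∀ s, ∑ a, π' s a = 1)
    -- value functions of π and π' (Bellman equations)
    (V V' : S → ℝ)
    (hV : ∀ s, V s = r s + γ * ∑ s', (∑ a, π s a * p s a s') * V s')
    (hV' : ∀ s, V' s = r s + γ * ∑ s', (∑ a, π' s a * p s a s') * V' s')
    -- discounted visitation frequency of π' started from each state
    (ρ' : S → S → ℝ)
    (hρ' : ∀ s u, ρ' s u = (if u = s then (1 : ℝ) else 0)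
            + γ * ∑ s'', ρ' s s'' * (∑ a, π' s'' a * p s'' a u))
    (s : S) :
    |V s - V' s|
      ≤ (2 * γ / (1 - γ)) * Rmax
          * ∑ s', ρ' s s' * ((1 / 2) * ∑ a, |π s' a - π' s' a|) := by
  set g : S → ℝ := fun u => γ * ∑ v, (policyKernel π p u v - policyKernel π' p u v) * V v
  have hV_le : ∀ u, |V u| ≤ Rmax / (1 - γ) :=
    abs_le_of_bellman (policyKernel_nonneg hπ0 hp0) (sum_policyKernel hπ1 hp1) hγ0 hγ1 hr hV
  have hρ_nonneg : ∀ u, 0 ≤ ρ' s u :=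
    nonneg_of_adjoint_bellman (policyKernel_nonneg hπ'0 hp0) (sum_policyKernel hπ'1 hp1)
      hγ0 hγ1 (fun u => by positivity) (hρ' s)
  have hg_le : ∀ u, |g u| ≤ (2 * γ / (1 - γ)) * Rmax * ((1 / 2) * ∑ a, |π u a - π' u a|) := by
    intro u
    calc |g u| ≤ γ * ((∑ a, |π u a - π' u a|) * (Rmax / (1 - γ))) := by
          rw [abs_mul, abs_of_nonneg hγ0]
          gcongr
          exact abs_sum_policyKernel_sub_mul_le hp0 hp1 hV_le u
      _ = _ := by field_simp
  calc |V s - V' s| = |∑ u, ρ' s u * g u| :=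
        congrArg abs (eq_sum_mul_of_bellman_of_adjoint (sub_eq_of_bellman hV hV') (hρ' s))
    _ ≤ ∑ u, ρ' s u * |g u| := by
        refine (abs_sum_le_sum_abs _ _).trans_eq ?_
        simp only [abs_mul, abs_of_nonneg (hρ_nonneg _)]
    _ ≤ ∑ u, ρ' s u * ((2 * γ / (1 - γ)) * Rmax * ((1 / 2) * ∑ a, |π u a - π' u a|)) := by
        gcongr with u
        · exact hρ_nonneg u
        · exact hg_le u
    _ = _ := by simp only [mul_sum, mul_left_comm]

/-- Value difference bound between two policies (state-only bounded reward):
`|V_π(s) − V_{π'}(s)| ≤ (2γ/(1−γ)) · R_max · Σ_{s'} ρ_{π'}^{(s)}(s') · D_TV(π‖π')[s']`. -/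
theorem value_difference_bound
    {S A : Type*} [Fintype S] [DecidableEq S] [Fintype A] [Nonempty S] [Nonempty A]
    -- transition kernel
    (p : S → A → S → ℝ)
    (hp0 : ∀ s a s', 0 ≤ p s a s') (hp1 : ∀ s a, ∑ s', p s a s' = 1)
    -- discount factor
    (γ : ℝ) (hγ0 : 0 ≤ γ) (hγ1 : γ < 1)
    -- state-only bounded reward
    (r : S → ℝ) (Rmax : ℝ) (hr : ∀ s, |r s| ≤ Rmax)
    -- the two policies
    (π π' : S → A → ℝ)
    (hπ0 : ∀ s a, 0 ≤ π s a) (hπ1 : ∀ s, ∑ a, π s a = 1)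
    (hπ'0 : ∀ s a, 0 ≤ π' s a) (hπ'1 : ∀ s, ∑ a, π' s a = 1)
    -- value functions of π and π' (Bellman equations)
    (V V' : S → ℝ)
    (hV : ∀ s, V s = r s + γ * ∑ s', (∑ a, π s a * p s a s') * V s')
    (hV' : ∀ s, V' s = r s + γ * ∑ s', (∑ a, π' s a * p s a s') * V' s')
    -- discounted visitation frequency of π' started from each state
    (ρ' : S → S → ℝ)
    (hρ' : ∀ s u, ρ' s u = (if u = s then (1 : ℝ) else 0)
            + γ * ∑ s'', ρ' s s'' * (∑ a, π' s'' a * p s'' a u))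
    (s : S) :
    |V s - V' s|
      ≤ (2 * γ / (1 - γ)) * Rmax
          * ∑ s', ρ' s s' * ((1 / 2) * ∑ a, |π s' a - π' s' a|) :=
  value_difference_bound_general p hp0 hp1 γ hγ0 hγ1 r Rmax hr π π' hπ0 hπ1 hπ'0 hπ'1 V V' hV hV' ρ'
    hρ' s
end

section
/- (Corollary, monotonic improvement bound with advantage replacement.) Suppose the reward depends only on the state and |r(s)| ≤ R_max for all s. Let π, π_k, π̂_β and π_D be policies and write ρ_D = ρ_{π_D}. Let 𝔸_k = max_{s,a} |A_{π_k}(s,a)|, and let Δ = max_s Σ_{s'} ρ_{π̂_β}^{(s)}(s') D_TV(π_k‖π̂_β)[s'], where ρ_{π̂_β}^{(s)} is the discounted visitation frequency of π̂_β started from s. Then J(π) − J(π_k) ≥ Σ_s ρ_D(s) Σ_a π(a|s) A_{π̂_β}(s,a) − (4γ/(1−γ)) · 𝔸_k · (max_s D_TV(π‖π_k)[s]) · [ Σ_s ρ_{π_k}(s) D_TV(π‖π_k)[s] + Σ_s ρ_{π̂_β}(s) D_TV(π_k‖π̂_β)[s] + Σ_s ρ_D(s) D_TV(π̂_β‖π_D)[s]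 ] − (2γ(γ+1)/(1−γ)²) · R_max · Δ. -/
/-!
By the performance difference lemma, `J(π) - J(π_k)` is the `ρ_π`-average of
`g(s) = ∑ₐ π(a|s) A_{π_k}(s,a)`; since `∑ₐ π_k(a|s) A_{π_k}(s,a) = 0`,
`|g(s)| ≤ 2 𝔸_k D_TV(π‖π_k)[s]`.
Moving the weights from `ρ_π` to `ρ_D` costs `‖ρ_π - ρ_D‖₁ · sup |g|`, and two discounted
visitations satisfy `‖ρ₁ - ρ₂‖₁ ≤ 2γ/(1-γ) ∑ ρ₂ D_TV(π₁‖π₂)`; going through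
`π → π_k → π̂_β → π_D` gives the middle term. Replacing `A_{π_k}` by `A_{π̂_β}` costs
`(1 + γ) sup |V_{π_k} - V_{π̂_β}|` per state, the performance difference lemma started at `s` bounds
`|V_{π_k}(s) - V_{π̂_β}(s)|` by `2γ R_max Δ/(1-γ)`, and `ρ_D` has mass `1/(1-γ)`.
-/

open Finset

section Stochastic

variable {ι κ : Type*} [Fintype κ]

def IsStochastic (K : ι → κ → ℝ) : Prop :=
  (∀ i j, 0 ≤ K i j) ∧ ∀ i, ∑ j, K i j = 1

theorem sum_mul_sum_eq_sum_sum_mul [Fintype ι] (x : ι → ℝ) (K : ι → κ → ℝ) (y : κ → ℝ) :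
    ∑ i, x i * ∑ j, K i j * y j = ∑ j, (∑ i, x i * K i j) * y j := by
  simp_rw [mul_sum, sum_mul, mul_assoc]
  exact sum_comm

theorem abs_sum_mul_le_of_abs_le [Fintype ι] (x : ι → ℝ) {y : ι → ℝ} {B : ℝ} (hy : ∀ i, |y i| ≤ B) :
    |∑ i, x i * y i| ≤ (∑ i, |x i|) * B := by
  rw [sum_mul]
  refine (abs_sum_le_sum_abs _ _).trans (sum_le_sum fun i _ => ?_)
  rw [abs_mul]
  exact mul_le_mul_of_nonneg_left (hy i) (abs_nonneg _)

theorem sum_abs_sub_le_add [Fintype ι] (x y z : ι → ℝ) :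
    ∑ i, |x i - z i| ≤ ∑ i, |x i - y i| + ∑ i, |y i - z i| := by
  rw [← sum_add_distrib]
  exact sum_le_sum fun i _ => abs_sub_le _ _ _

namespace IsStochastic

variable {K : ι → κ → ℝ}

theorem sum_sum_mul [Fintype ι] (hK : IsStochastic K) (x : ι → ℝ) :
    ∑ j, ∑ i, x i * K i j = ∑ i, x i := by
  rw [sum_comm]
  simp_rw [← mul_sum, hK.2, mul_one]

theorem abs_sum_mul_le (hK : IsStochastic K) (i : ι) {y : κ → ℝ} {B : ℝ}
    (hy : ∀ j, |y j| ≤ B) : |∑ j, K i j * y j| ≤ B := by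
  simpa [abs_of_nonneg (hK.1 i _), hK.2 i] using abs_sum_mul_le_of_abs_le (K i) hy

theorem sum_abs_sum_mul_le [Fintype ι] (hK : IsStochastic K) (x : ι → ℝ) :
    ∑ j, |∑ i, x i * K i j| ≤ ∑ i, |x i| :=
  calc ∑ j, |∑ i, x i * K i j| ≤ ∑ j, ∑ i, |x i| * K i j := by
        gcongr with j
        refine (abs_sum_le_sum_abs _ _).trans_eq (sum_congr rfl fun i _ => ?_)
        rw [abs_mul, abs_of_nonneg (hK.1 i j)]
    _ = ∑ i, |x i| := hK.sum_sum_mul _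

end IsStochastic

end Stochastic

section Discounted

variable {S : Type*} [Fintype S] {γ : ℝ} {P : S → S → ℝ} {d ρ : S → ℝ}

def IsDiscountedVisitation (γ : ℝ) (P : S → S → ℝ) (d ρ : S → ℝ) : Prop :=
  ∀ s', ρ s' = d s' + γ * ∑ s, ρ s * P s s'

def IsValueFunction (γ : ℝ) (P : S → S → ℝ) (r V : S → ℝ) : Prop :=
  ∀ s, V s = r s + γ * ∑ s', P s s' * V s'

namespace IsDiscountedVisitation

theorem sum_eq (hP : IsStochastic P) (hρ : IsDiscountedVisitation γ P d ρ) :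
    (1 - γ) * ∑ s, ρ s = ∑ s, d s := by
  have h : ∑ s', ρ s' = ∑ s', d s' + γ * ∑ s, ρ s :=
    calc ∑ s', ρ s' = ∑ s', (d s' + γ * ∑ s, ρ s * P s s') := sum_congr rfl fun s' _ => hρ s'
      _ = ∑ s', d s' + γ * ∑ s, ρ s := by rw [sum_add_distrib, ← mul_sum, hP.sum_sum_mul]
  linarith

theorem nonneg (hγ0 : 0 ≤ γ) (hγ1 : γ < 1) (hP : IsStochastic P) (hd : ∀ s, 0 ≤ d s)
    (hρ : IsDiscountedVisitation γ P d ρ) (s : S) : 0 ≤ ρ s := by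
  -- the negative part `n` of `ρ` satisfies `n ≤ γ n P`, which has total mass at most `γ ∑ n`
  set n : S → ℝ := fun s => max (-ρ s) 0
  have hn0 : ∀ s, 0 ≤ n s := fun s => le_max_right _ _
  have hn : ∀ s', n s' ≤ γ * ∑ s, n s * P s s' := by
    intro s'
    have hneg : -ρ s' = -d s' + γ * ∑ s, -ρ s * P s s' := by
      simp only [hρ s', neg_mul, sum_neg_distrib]
      ring
    have hmono : ∑ s, -ρ s * P s s' ≤ ∑ s, n s * P s s' :=
      sum_le_sum fun s _ => mul_le_mul_of_nonneg_right (le_max_left _ _) (hP.1 s s')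
    refine max_le ?_ (mul_nonneg hγ0 (sum_nonneg fun s _ => mul_nonneg (hn0 s) (hP.1 s s')))
    nlinarith [hd s']
  have hsum : ∑ s, n s ≤ γ * ∑ s, n s :=
    calc ∑ s', n s' ≤ ∑ s', γ * ∑ s, n s * P s s' := sum_le_sum fun s' _ => hn s'
      _ = γ * ∑ s, n s := by rw [← mul_sum, hP.sum_sum_mul]
  have hzero : ∑ s, n s = 0 := by nlinarith [sum_nonneg fun s (_ : s ∈ univ) => hn0 s]
  have hns : n s = 0 := (sum_eq_zero_iff_of_nonneg fun s _ => hn0 s).1 hzero s (mem_univ s)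
  linarith [le_max_left (-ρ s) 0]

theorem sum_abs_sub_le (hγ0 : 0 ≤ γ) (hγ1 : γ < 1) {P₁ P₂ : S → S → ℝ} (hP₁ : IsStochastic P₁)
    {ρ₁ ρ₂ : S → ℝ} (hρ₁ : IsDiscountedVisitation γ P₁ d ρ₁)
    (hρ₂ : IsDiscountedVisitation γ P₂ d ρ₂) (hρ₂0 : ∀ s, 0 ≤ ρ₂ s) :
    ∑ s, |ρ₁ s - ρ₂ s| ≤ γ / (1 - γ) * ∑ s, ρ₂ s * ∑ s', |P₁ s s' - P₂ s s'| := by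
  set c := ∑ s, ρ₂ s * ∑ s', |P₁ s s' - P₂ s s'|
  have hdiff : ∀ s', ρ₁ s' - ρ₂ s' =
      γ * (∑ s, (ρ₁ s - ρ₂ s) * P₁ s s' + ∑ s, ρ₂ s * (P₁ s s' - P₂ s s')) := by
    intro s'
    simp only [hρ₁ s', hρ₂ s', sub_mul, mul_sub, sum_sub_distrib]
    ring
  have hcross : ∑ s', |∑ s, ρ₂ s * (P₁ s s' - P₂ s s')| ≤ c :=
    calc ∑ s', |∑ s, ρ₂ s * (P₁ s s' - P₂ s s')|
        ≤ ∑ s', ∑ s, ρ₂ s * |P₁ s s' - P₂ s s'| := by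
          gcongr with s'
          refine (abs_sum_le_sum_abs _ _).trans_eq (sum_congr rfl fun s _ => ?_)
          rw [abs_mul, abs_of_nonneg (hρ₂0 s)]
      _ = c := by simp only [c, mul_sum]; exact sum_comm
  have hsum : ∑ s, |ρ₁ s - ρ₂ s| ≤ γ * (∑ s, |ρ₁ s - ρ₂ s| + c) :=
    calc ∑ s', |ρ₁ s' - ρ₂ s'|
        ≤ ∑ s', γ * (|∑ s, (ρ₁ s - ρ₂ s) * P₁ s s'| + |∑ s, ρ₂ s * (P₁ s s' - P₂ s s')|) := by
          gcongr with s'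
          rw [hdiff, abs_mul, abs_of_nonneg hγ0]
          gcongr
          exact abs_add_le _ _
      _ ≤ γ * (∑ s, |ρ₁ s - ρ₂ s| + c) := by
          rw [← mul_sum, sum_add_distrib]
          exact mul_le_mul_of_nonneg_left (add_le_add (hP₁.sum_abs_sum_mul_le _) hcross) hγ0
  rw [div_mul_eq_mul_div, le_div_iff₀ (by linarith)]
  linarith

theorem mul_sum_mul_sum_eq_sub (hρ : IsDiscountedVisitation γ P d ρ) (X : S → ℝ) :
    γ * ∑ s, ρ s * ∑ s', P s s' * X s' = ∑ s, ρ s * X s - ∑ s, d s * X s := by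
  rw [sum_mul_sum_eq_sum_sum_mul, mul_sum, ← sum_sub_distrib]
  refine sum_congr rfl fun s' _ => ?_
  rw [hρ s']
  ring

theorem performance_difference {r V₁ V₂ : S → ℝ} (hρ : IsDiscountedVisitation γ P d ρ)
    (hV₁ : IsValueFunction γ P r V₁) :
    ∑ s, d s * V₁ s - ∑ s, d s * V₂ s = ∑ s, ρ s * (r s + γ * ∑ s', P s s' * V₂ s' - V₂ s) := by
  have h₁ : ∑ s, ρ s * (r s + γ * ∑ s', P s s' * V₁ s' - V₁ s) = 0 :=
    sum_eq_zero fun s _ => by rw [← hV₁ s, sub_self, mul_zero]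
  have h₂ := hρ.mul_sum_mul_sum_eq_sub V₁
  have h₃ := hρ.mul_sum_mul_sum_eq_sub V₂
  simp only [mul_sub, mul_add, sum_add_distrib, sum_sub_distrib, mul_left_comm _ γ, ← mul_sum]
    at h₁ h₂ h₃ ⊢
  linarith

end IsDiscountedVisitation

theorem exists_isDiscountedVisitation (hγ0 : 0 ≤ γ) (hγ1 : γ < 1) (hP : IsStochastic P)
    (d : S → ℝ) : ∃ ρ, IsDiscountedVisitation γ P d ρ := by
  -- `ρ ↦ ρ - γ ρ P` is injective since `ρ ↦ ρ P` does not increase the `ℓ¹` norm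
  let L : (S → ℝ) →ₗ[ℝ] (S → ℝ) := LinearMap.id - γ • Matrix.vecMulLinear P
  have hL : ∀ x s', L x s' = x s' - γ * ∑ s, x s * P s s' := fun x s' => rfl
  have hinj : Function.Injective L := by
    refine (injective_iff_map_eq_zero L).2 fun x hx => ?_
    have hfix : ∀ s', x s' = γ * ∑ s, x s * P s s' := fun s' => by
      have h0 : L x s' = 0 := congrFun hx s'
      linarith [hL x s']
    have hle : ∑ s, |x s| ≤ γ * ∑ s, |x s| :=
      calc ∑ s', |x s'| = γ * ∑ s', |∑ s, x s * P s s'| := by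
            rw [mul_sum]
            refine sum_congr rfl fun s' _ => ?_
            conv_lhs => rw [hfix s']
            rw [abs_mul, abs_of_nonneg hγ0]
        _ ≤ γ * ∑ s, |x s| := mul_le_mul_of_nonneg_left (hP.sum_abs_sum_mul_le x) hγ0
    have hzero : ∑ s, |x s| = 0 :=
      le_antisymm (by nlinarith [sum_nonneg fun s (_ : s ∈ univ) => abs_nonneg (x s)])
        (sum_nonneg fun s _ => abs_nonneg _)
    funext s
    exact abs_eq_zero.1 ((sum_eq_zero_iff_of_nonneg fun s _ => abs_nonneg _).1 hzero s (mem_univ s))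
  obtain ⟨ρ, hρ⟩ := LinearMap.injective_iff_surjective.1 hinj d
  refine ⟨ρ, fun s' => ?_⟩
  have hd : L ρ s' = d s' := congrFun hρ s'
  linarith [hL ρ s']

theorem IsValueFunction.abs_le (hγ0 : 0 ≤ γ) (hγ1 : γ < 1) (hP : IsStochastic P) {r V : S → ℝ}
    {R : ℝ} (hr : ∀ s, |r s| ≤ R) (hV : IsValueFunction γ P r V) (s : S) :
    |V s| ≤ R / (1 - γ) := by
  obtain ⟨s₀, -, hs₀⟩ := exists_max_image univ (fun s => |V s|) ⟨s, mem_univ s⟩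
  have hstep : |V s₀| ≤ R + γ * |V s₀| := by
    conv_lhs => rw [hV s₀]
    refine (abs_add_le _ _).trans (add_le_add (hr s₀) ?_)
    rw [abs_mul, abs_of_nonneg hγ0]
    exact mul_le_mul_of_nonneg_left (hP.abs_sum_mul_le s₀ fun s' => hs₀ s' (mem_univ s')) hγ0
  rw [le_div_iff₀ (by linarith)]
  nlinarith [hs₀ s (mem_univ s)]

end Discounted

section TotalVariation

variable {S A : Type*} [Fintype A]

noncomputable def tvDist (π π' : S → A → ℝ) (s : S) : ℝ :=
  (1 / 2) * ∑ a, |π s a - π' s a|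

theorem tvDist_comm (π π' : S → A → ℝ) (s : S) : tvDist π π' s = tvDist π' π s := by
  simp only [tvDist, abs_sub_comm]

end TotalVariation

section Policy

variable {S A : Type*} [Fintype S] [Fintype A] {p : S → A → S → ℝ} {γ : ℝ} {r : S → ℝ}

def policyTransition (p : S → A → S → ℝ) (π : S → A → ℝ) : S → S → ℝ :=
  fun s s' => ∑ a, π s a * p s a s'

def advantage (p : S → A → S → ℝ) (γ : ℝ) (r V : S → ℝ) (s : S) (a : A) : ℝ :=
  (r s + γ * ∑ s', p s a s' * V s') - V s

theorem IsStochastic.policyTransition (hp : ∀ s, IsStochastic (p s)) {π : S → A → ℝ}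
    (hπ : IsStochastic π) : IsStochastic (policyTransition p π) :=
  ⟨fun s s' => sum_nonneg fun a _ => mul_nonneg (hπ.1 s a) ((hp s).1 a s'),
    fun s => ((hp s).sum_sum_mul (π s)).trans (hπ.2 s)⟩

theorem sum_abs_policyTransition_sub_le (hp : ∀ s, IsStochastic (p s)) (π₁ π₂ : S → A → ℝ)
    (s : S) :
    ∑ s', |policyTransition p π₁ s s' - policyTransition p π₂ s s'| ≤ 2 * tvDist π₁ π₂ s :=
  calc ∑ s', |policyTransition p π₁ s s' - policyTransition p π₂ s s'|
      = ∑ s', |∑ a, (π₁ s a - π₂ s a) * p s a s'| := by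
        simp only [policyTransition, sub_mul, sum_sub_distrib]
    _ ≤ ∑ a, |π₁ s a - π₂ s a| := (hp s).sum_abs_sum_mul_le _
    _ = 2 * tvDist π₁ π₂ s := by rw [tvDist]; ring

theorem sum_mul_advantage {π : S → A → ℝ} {s : S} (hπ : ∑ a, π s a = 1) (V : S → ℝ) :
    ∑ a, π s a * advantage p γ r V s a
      = r s + γ * ∑ s', policyTransition p π s s' * V s' - V s := by
  have h := sum_mul_sum_eq_sum_sum_mul (π s) (p s) V
  simp only [advantage, policyTransition, mul_sub, mul_add, sum_sub_distrib, sum_add_distrib,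
    ← sum_mul, hπ, mul_left_comm _ γ, ← mul_sum] at h ⊢
  rw [h]
  ring

theorem abs_sum_mul_advantage_le {π πk : S → A → ℝ} {Vk : S → ℝ} {s : S}
    (hπ : ∑ a, π s a = 1) (hπk : ∑ a, πk s a = 1)
    (hVk : IsValueFunction γ (policyTransition p πk) r Vk) {c B : ℝ}
    (hB : ∀ a, |advantage p γ r Vk s a - c| ≤ B) :
    |∑ a, π s a * advantage p γ r Vk s a| ≤ 2 * tvDist π πk s * B := by
  have hk : ∑ a, πk s a * advantage p γ r Vk s a = 0 := by
    rw [sum_mul_advantage hπk, ← hVk s, sub_self]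
  have hc : ∑ a, (π s a - πk s a) * c = 0 := by
    rw [← sum_mul, sum_sub_distrib, hπ, hπk, sub_self, zero_mul]
  have heq : ∑ a, π s a * advantage p γ r Vk s a
      = ∑ a, (π s a - πk s a) * (advantage p γ r Vk s a - c) := by
    simp only [mul_sub, sub_mul, sum_sub_distrib] at hk hc ⊢
    linarith
  rw [heq]
  refine (abs_sum_mul_le_of_abs_le _ hB).trans_eq ?_
  rw [tvDist]
  ring

theorem IsDiscountedVisitation.sum_abs_sub_le_tvDist (hγ0 : 0 ≤ γ) (hγ1 : γ < 1)
    (hp : ∀ s, IsStochastic (p s)) {π₁ π₂ : S → A → ℝ} (hπ₁ : IsStochastic π₁)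
    {d ρ₁ ρ₂ : S → ℝ} (hρ₁ : IsDiscountedVisitation γ (policyTransition p π₁) d ρ₁)
    (hρ₂ : IsDiscountedVisitation γ (policyTransition p π₂) d ρ₂) (hρ₂0 : ∀ s, 0 ≤ ρ₂ s) :
    ∑ s, |ρ₁ s - ρ₂ s| ≤ 2 * γ / (1 - γ) * ∑ s, ρ₂ s * tvDist π₁ π₂ s := by
  refine (hρ₁.sum_abs_sub_le hγ0 hγ1 (hπ₁.policyTransition hp) hρ₂ hρ₂0).trans ?_
  calc γ / (1 - γ) * ∑ s, ρ₂ s * ∑ s', |policyTransition p π₁ s s' - policyTransition p π₂ s s'|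
      ≤ γ / (1 - γ) * ∑ s, ρ₂ s * (2 * tvDist π₁ π₂ s) := by
        have : 0 ≤ γ / (1 - γ) := div_nonneg hγ0 (by linarith)
        gcongr with s
        · exact hρ₂0 s
        · exact sum_abs_policyTransition_sub_le hp π₁ π₂ s
    _ = 2 * γ / (1 - γ) * ∑ s, ρ₂ s * tvDist π₁ π₂ s := by
        rw [mul_sum, mul_sum]
        exact sum_congr rfl fun s _ => by ring

theorem abs_value_sub_le_visitation_tvDist [DecidableEq S] (hγ0 : 0 ≤ γ) (hγ1 : γ < 1)
    (hp : ∀ s, IsStochastic (p s)) {πk πβ : S → A → ℝ} (hπk : IsStochastic πk)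
    (hπβ : IsStochastic πβ) {R : ℝ} (hr : ∀ s, |r s| ≤ R) {Vk Vβ : S → ℝ}
    (hVk : IsValueFunction γ (policyTransition p πk) r Vk)
    (hVβ : IsValueFunction γ (policyTransition p πβ) r Vβ) {s : S} {ρs : S → ℝ}
    (hρs : IsDiscountedVisitation γ (policyTransition p πβ) (fun u => if u = s then 1 else 0) ρs) :
    |Vk s - Vβ s| ≤ 2 * γ * R / (1 - γ) * ∑ u, ρs u * tvDist πk πβ u := by
  have hρs0 := hρs.nonneg hγ0 hγ1 (hπβ.policyTransition hp) fun u => by split_ifs <;> norm_num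
  have hpdl := hρs.performance_difference (V₂ := Vk) hVβ
  simp only [ite_mul, one_mul, zero_mul, sum_ite_eq', mem_univ, if_true] at hpdl
  -- up to the action-independent `r u - Vk u`, the advantage is `γ` times a value `≤ R / (1 - γ)`
  have hadv : ∀ u a, |advantage p γ r Vk u a - (r u - Vk u)| ≤ γ * (R / (1 - γ)) := by
    intro u a
    rw [show advantage p γ r Vk u a - (r u - Vk u) = γ * ∑ s', p u a s' * Vk s' by
      unfold advantage; ring, abs_mul, abs_of_nonneg hγ0]
    exact mul_le_mul_of_nonneg_left
      ((hp u).abs_sum_mul_le a (hVk.abs_le hγ0 hγ1 (hπk.policyTransition hp) hr)) hγ0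
  have hstep : ∀ u, |r u + γ * ∑ s', policyTransition p πβ u s' * Vk s' - Vk u|
      ≤ 2 * tvDist πk πβ u * (γ * (R / (1 - γ))) := by
    intro u
    rw [← sum_mul_advantage (hπβ.2 u), tvDist_comm]
    exact abs_sum_mul_advantage_le (hπβ.2 u) (hπk.2 u) hVk (hadv u)
  rw [abs_sub_comm, hpdl]
  calc |∑ u, ρs u * (r u + γ * ∑ s', policyTransition p πβ u s' * Vk s' - Vk u)|
      ≤ ∑ u, ρs u * (2 * tvDist πk πβ u * (γ * (R / (1 - γ)))) := by
        refine (abs_sum_le_sum_abs _ _).trans (sum_le_sum fun u _ => ?_)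
        rw [abs_mul, abs_of_nonneg (hρs0 u)]
        exact mul_le_mul_of_nonneg_left (hstep u) (hρs0 u)
    _ = 2 * γ * R / (1 - γ) * ∑ u, ρs u * tvDist πk πβ u := by
        rw [mul_sum]
        exact sum_congr rfl fun u _ => by ring

theorem abs_sum_mul_advantage_sub_le (hγ0 : 0 ≤ γ) (hp : ∀ s, IsStochastic (p s))
    {π : S → A → ℝ} (hπ : IsStochastic π) {V V' : S → ℝ} {W : ℝ} (hW : ∀ s, |V s - V' s| ≤ W)
    (s : S) :
    |∑ a, π s a * advantage p γ r V s a - ∑ a, π s a * advantage p γ r V' s a|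
      ≤ (1 + γ) * W := by
  rw [← sum_sub_distrib]
  simp_rw [← mul_sub]
  refine hπ.abs_sum_mul_le s fun a => ?_
  have h : advantage p γ r V s a - advantage p γ r V' s a
      = γ * ∑ s', p s a s' * (V s' - V' s') - (V s - V' s) := by
    simp only [advantage, mul_sub, sum_sub_distrib]
    ring
  rw [h]
  refine (abs_sub _ _).trans ?_
  rw [abs_mul, abs_of_nonneg hγ0]
  linarith [mul_le_mul_of_nonneg_left ((hp s).abs_sum_mul_le a hW) hγ0, hW s]

theorem IsDiscountedVisitation.abs_sum_mul_sub_le {P : S → S → ℝ} {d ρ : S → ℝ} (hγ0 : 0 ≤ γ)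
    (hγ1 : γ < 1) (hP : IsStochastic P) (hd0 : ∀ s, 0 ≤ d s) (hd1 : ∑ s, d s = 1)
    (hρ : IsDiscountedVisitation γ P d ρ) {g g' : S → ℝ} {B : ℝ} (hB : ∀ s, |g s - g' s| ≤ B) :
    |∑ s, ρ s * g s - ∑ s, ρ s * g' s| ≤ B / (1 - γ) := by
  have hρ0 := hρ.nonneg hγ0 hγ1 hP hd0
  have hmass : ∑ s, |ρ s| = 1 / (1 - γ) := by
    have h := hρ.sum_eq hP
    rw [hd1] at h
    simp_rw [abs_of_nonneg (hρ0 _)]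
    rw [eq_div_iff (by linarith)]
    linarith
  rw [← sum_sub_distrib]
  simp_rw [← mul_sub]
  refine (abs_sum_mul_le_of_abs_le ρ hB).trans_eq ?_
  rw [hmass]
  ring

theorem abs_sum_visitation_mul_sub_le [Nonempty S] (hγ0 : 0 ≤ γ) (hγ1 : γ < 1)
    (hp : ∀ s, IsStochastic (p s))
    {π₁ π₂ π₃ π₄ : S → A → ℝ} (hπ₁ : IsStochastic π₁) (hπ₂ : IsStochastic π₂)
    (hπ₃ : IsStochastic π₃) (hπ₄ : IsStochastic π₄) {d ρ₁ ρ₂ ρ₃ ρ₄ : S → ℝ} (hd : ∀ s, 0 ≤ d s)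
    (hρ₁ : IsDiscountedVisitation γ (policyTransition p π₁) d ρ₁)
    (hρ₂ : IsDiscountedVisitation γ (policyTransition p π₂) d ρ₂)
    (hρ₃ : IsDiscountedVisitation γ (policyTransition p π₃) d ρ₃)
    (hρ₄ : IsDiscountedVisitation γ (policyTransition p π₄) d ρ₄)
    {g : S → ℝ} {B : ℝ} (hg : ∀ s, |g s| ≤ B) :
    |∑ s, ρ₁ s * g s - ∑ s, ρ₄ s * g s| ≤ 2 * γ / (1 - γ) * B * (∑ s, ρ₂ s * tvDist π₁ π₂ s
      + ∑ s, ρ₃ s * tvDist π₂ π₃ s + ∑ s, ρ₄ s * tvDist π₃ π₄ s) := by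
  have hB : 0 ≤ B := (abs_nonneg _).trans (hg (Classical.arbitrary S))
  have hchain : ∑ s, |ρ₁ s - ρ₄ s| ≤ 2 * γ / (1 - γ) * (∑ s, ρ₂ s * tvDist π₁ π₂ s
      + ∑ s, ρ₃ s * tvDist π₂ π₃ s + ∑ s, ρ₄ s * tvDist π₃ π₄ s) := by
    refine ((sum_abs_sub_le_add _ ρ₃ _).trans
      (add_le_add_left (sum_abs_sub_le_add _ ρ₂ _) _)).trans ?_
    rw [mul_add, mul_add]
    gcongr
    · exact hρ₁.sum_abs_sub_le_tvDist hγ0 hγ1 hp hπ₁ hρ₂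
        (hρ₂.nonneg hγ0 hγ1 (hπ₂.policyTransition hp) hd)
    · exact hρ₂.sum_abs_sub_le_tvDist hγ0 hγ1 hp hπ₂ hρ₃
        (hρ₃.nonneg hγ0 hγ1 (hπ₃.policyTransition hp) hd)
    · exact hρ₃.sum_abs_sub_le_tvDist hγ0 hγ1 hp hπ₃ hρ₄
        (hρ₄.nonneg hγ0 hγ1 (hπ₄.policyTransition hp) hd)
  rw [← sum_sub_distrib]
  simp_rw [← sub_mul]
  calc |∑ s, (ρ₁ s - ρ₄ s) * g s| ≤ (∑ s, |ρ₁ s - ρ₄ s|) * B := abs_sum_mul_le_of_abs_le _ hg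
    _ ≤ _ := by
      rw [mul_right_comm]
      exact mul_le_mul_of_nonneg_right hchain hB

end Policy

/-- Corollary: monotonic improvement bound with advantage replacement. -/
theorem offline_improvement_bound_with_replacement
    {S A : Type*} [Fintype S] [DecidableEq S] [Fintype A] [Nonempty S] [Nonempty A]
    -- transition kernel
    (p : S → A → S → ℝ)
    (hp0 : ∀ s a s', 0 ≤ p s a s') (hp1 : ∀ s a, ∑ s', p s a s' = 1)
    -- discount factor
    (γ : ℝ) (hγ0 : 0 ≤ γ) (hγ1 : γ < 1)
    -- initial state distribution
    (d0 : S → ℝ) (hd00 : ∀ s, 0 ≤ d0 s) (hd01 : ∑ s, d0 s = 1)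
    -- state-only bounded reward
    (r : S → ℝ) (Rmax : ℝ) (hr : ∀ s, |r s| ≤ Rmax)
    -- policies: target π, updated π_k, estimated behavior π̂β, dataset policy π_D
    (π πk πβ πD : S → A → ℝ)
    (hπ0 : ∀ s a, 0 ≤ π s a) (hπ1 : ∀ s, ∑ a, π s a = 1)
    (hπk0 : ∀ s a, 0 ≤ πk s a) (hπk1 : ∀ s, ∑ a, πk s a = 1)
    (hπβ0 : ∀ s a, 0 ≤ πβ s a) (hπβ1 : ∀ s, ∑ a, πβ s a = 1)
    (hπD0 : ∀ s a, 0 ≤ πD s a) (hπD1 : ∀ s, ∑ a, πD s a = 1)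
    -- value functions of π, π_k and π̂β (Bellman equations, state-only reward)
    (V Vk Vβ : S → ℝ)
    (hV : ∀ s, V s = r s + γ * ∑ s', (∑ a, π s a * p s a s') * V s')
    (hVk : ∀ s, Vk s = r s + γ * ∑ s', (∑ a, πk s a * p s a s') * Vk s')
    (hVβ : ∀ s, Vβ s = r s + γ * ∑ s', (∑ a, πβ s a * p s a s') * Vβ s')
    -- discounted visitation frequencies (from d₀) of π_k, π̂β and π_D
    (ρk ρβ ρD : S → ℝ)
    (hρk : ∀ s', ρk s' = d0 s' + γ * ∑ s, ρk s * (∑ a, πk s a * p s a s'))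
    (hρβ : ∀ s', ρβ s' = d0 s' + γ * ∑ s, ρβ s * (∑ a, πβ s a * p s a s'))
    (hρD : ∀ s', ρD s' = d0 s' + γ * ∑ s, ρD s * (∑ a, πD s a * p s a s'))
    -- discounted visitation frequency of π̂β started from each state
    (ρβs : S → S → ℝ)
    (hρβs : ∀ s u, ρβs s u = (if u = s then (1 : ℝ) else 0)
            + γ * ∑ s'', ρβs s s'' * (∑ a, πβ s'' a * p s'' a u)) :
    (∑ s, d0 s * V s) - (∑ s, d0 s * Vk s)
      ≥ (∑ s, ρD s * ∑ a, π s a * ((r s + γ * ∑ s', p s a s' * Vβ s') - Vβ s))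
        - (4 * γ / (1 - γ))
            * (univ.sup' univ_nonempty fun sa : S × A =>
                |(r sa.1 + γ * ∑ s', p sa.1 sa.2 s' * Vk s') - Vk sa.1|)
            * (univ.sup' univ_nonempty fun s =>
                (1 / 2) * ∑ a, |π s a - πk s a|)
            * ((∑ s, ρk s * ((1 / 2) * ∑ a, |π s a - πk s a|))
                + (∑ s, ρβ s * ((1 / 2) * ∑ a, |πk s a - πβ s a|))
                + (∑ s, ρD s * ((1 / 2) * ∑ a, |πβ s a - πD s a|)))
        - (2 * γ * (γ + 1) / (1 - γ) ^ 2) * Rmax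
            * (univ.sup' univ_nonempty fun s =>
                ∑ s', ρβs s s' * ((1 / 2) * ∑ a, |πk s' a - πβ s' a|)) := by
  have hp : ∀ s, IsStochastic (p s) := fun s => ⟨hp0 s, hp1 s⟩
  have hπ : IsStochastic π := ⟨hπ0, hπ1⟩
  have hπk : IsStochastic πk := ⟨hπk0, hπk1⟩
  have hπβ : IsStochastic πβ := ⟨hπβ0, hπβ1⟩
  have hπD : IsStochastic πD := ⟨hπD0, hπD1⟩
  have hR : 0 ≤ Rmax := (abs_nonneg _).trans (hr (Classical.arbitrary S))
  obtain ⟨ρπ, hρπ⟩ := exists_isDiscountedVisitation hγ0 hγ1 (hπ.policyTransition hp) d0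
  set 𝔸 := univ.sup' univ_nonempty fun sa : S × A => |advantage p γ r Vk sa.1 sa.2| with h𝔸
  set ε := univ.sup' univ_nonempty fun s => tvDist π πk s with hε
  set Δ := univ.sup' univ_nonempty fun s => ∑ s', ρβs s s' * tvDist πk πβ s' with hΔ
  have hA : ∀ s a, |advantage p γ r Vk s a - 0| ≤ 𝔸 := fun s a => by
    simpa using le_sup' (fun sa : S × A => |advantage p γ r Vk sa.1 sa.2|) (mem_univ (s, a))
  have hg : ∀ s, |∑ a, π s a * advantage p γ r Vk s a| ≤ 2 * ε * 𝔸 := fun s =>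
    (abs_sum_mul_advantage_le (hπ1 s) (hπk1 s) hVk (hA s)).trans <|
      mul_le_mul_of_nonneg_right (by simpa using le_sup' (tvDist π πk) (mem_univ s))
        ((abs_nonneg _).trans (hA s (Classical.arbitrary A)))
  have hW : ∀ s, |Vk s - Vβ s| ≤ 2 * γ * Rmax / (1 - γ) * Δ := fun s =>
    (abs_value_sub_le_visitation_tvDist hγ0 hγ1 hp hπk hπβ hr hVk hVβ (hρβs s)).trans <|
      mul_le_mul_of_nonneg_left (le_sup' (fun s => ∑ s', ρβs s s' * tvDist πk πβ s') (mem_univ s))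
        (div_nonneg (by positivity) (by linarith))
  have hJ : ∑ s, d0 s * V s - ∑ s, d0 s * Vk s
      = ∑ s, ρπ s * ∑ a, π s a * advantage p γ r Vk s a :=
    (hρπ.performance_difference hV).trans
      (sum_congr rfl fun s _ => by rw [sum_mul_advantage (hπ1 s)])
  have hshift := abs_sum_visitation_mul_sub_le hγ0 hγ1 hp hπ hπk hπβ hπD hd00 hρπ hρk hρβ hρD hg
  have hrepl := IsDiscountedVisitation.abs_sum_mul_sub_le hγ0 hγ1 (hπD.policyTransition hp)
    hd00 hd01 hρD (abs_sum_mul_advantage_sub_le (r := r) hγ0 hp hπ hW)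
  rw [show 2 * γ / (1 - γ) * (2 * ε * 𝔸) = 4 * γ / (1 - γ) * 𝔸 * ε by ring] at hshift
  rw [show (1 + γ) * (2 * γ * Rmax / (1 - γ) * Δ) / (1 - γ)
    = 2 * γ * (γ + 1) / (1 - γ) ^ 2 * Rmax * Δ by field_simp; ring] at hrepl
  simp only [h𝔸, hε, hΔ, tvDist, advantage] at hJ hshift hrepl
  linarith [(abs_le.1 hshift).1, (abs_le.1 hrepl).1]
end
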